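/- arXiv:1610.03873 — 10 statements merged into one kernel-verified Lean document; each statement's English description precedes it below -/
import Mathlib

section
/- For integers n > a ≥ 3, the maximum number of edges ex(n,a) in a graph on n vertices with no clique of size a satisfies ex(n,a) ≤ ⌊(n/(n-2)) · ex(n-1,a)⌋. -/
/-- The Turán number: maximum number of edges of a simple graph on `n` vertices
containing no clique of size `a`. -/
noncomputable def turanEx (n a : ℕ) : ℕ :=
  sSup {m | ∃ G : SimpleGraph (Fin n), G.CliqueFree a ∧ G.edgeSet.ncard = m}

lemma turanEx_bddAbove (n a : ℕ) :
    BddAbove {m | ∃ G : SimpleGraph (Fin n), G.CliqueFree a ∧ G.edgeSet.ncard = m} := by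
  refine ⟨n.choose 2, fun m hm => ?_⟩
  obtain ⟨G, -, rfl⟩ := hm
  classical
  rw [Set.ncard_eq_toFinset_card' G.edgeSet]
  have := G.card_edgeFinset_le_card_choose_two
  simpa [SimpleGraph.edgeFinset] using this

lemma le_turanEx {n a : ℕ} (G : SimpleGraph (Fin n)) (h : G.CliqueFree a) :
    G.edgeSet.ncard ≤ turanEx n a :=
  le_csSup (turanEx_bddAbove n a) ⟨G, h, rfl⟩

lemma turanEx_mem (n a : ℕ) (ha : 2 ≤ a) :
    ∃ G : SimpleGraph (Fin n), G.CliqueFree a ∧ G.edgeSet.ncard = turanEx n a := by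
  have hne : (0 : ℕ) ∈ {m | ∃ G : SimpleGraph (Fin n), G.CliqueFree a ∧ G.edgeSet.ncard = m} :=
    ⟨⊥, SimpleGraph.cliqueFree_bot ha, by simp⟩
  exact Nat.sSup_mem ⟨0, hne⟩ (turanEx_bddAbove n a)

/-- Deleting a vertex from an `a`-clique-free graph. -/
lemma delete_vertex_le {m a : ℕ} (G : SimpleGraph (Fin (m + 1))) [DecidableRel G.Adj]
    (hG : G.CliqueFree a) (v : Fin (m + 1)) :
    G.edgeFinset.card - G.degree v ≤ turanEx m a := by
  classical
  set f : Fin m ↪ Fin (m + 1) := v.succAboveEmb with hf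
  set H : SimpleGraph (Fin m) := G.comap f with hH
  have hHfree : H.CliqueFree a := hG.comap (SimpleGraph.Embedding.comap f G).isContained
  have himg : Finset.image (Sym2.map f) H.edgeFinset
      = G.edgeFinset \ G.incidenceFinset v := by
    ext e
    induction e with
    | _ x y =>
      simp only [Finset.mem_image, Finset.mem_sdiff, SimpleGraph.mem_edgeFinset,
        SimpleGraph.mem_incidenceFinset, SimpleGraph.incidenceSet]
      constructor
      · rintro ⟨e', he', hmap⟩
        induction e' with
        | _ x' y' =>
          simp only [SimpleGraph.mem_edgeFinset, SimpleGraph.mem_edgeSet, hH,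
            SimpleGraph.comap_adj] at he'
          rw [← hmap]
          simp only [Sym2.map_pair_eq, SimpleGraph.mem_edgeSet, Set.mem_setOf_eq, Sym2.mem_iff]
          refine ⟨he', ?_⟩
          rintro ⟨-, hv | hv⟩ <;>
            exact Fin.succAbove_ne v _ hv.symm
      · rintro ⟨hxy, hnot⟩
        rw [SimpleGraph.mem_edgeSet] at hxy
        have hx : x ≠ v := by
          rintro rfl
          exact hnot ⟨hxy, by simp⟩
        have hy : y ≠ v := by
          rintro rfl
          exact hnot ⟨hxy, by simp⟩
        obtain ⟨x', hx'⟩ := Fin.exists_succAbove_eq hx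
        obtain ⟨y', hy'⟩ := Fin.exists_succAbove_eq hy
        refine ⟨s(x', y'), ?_, by simp [hf, hx', hy']⟩
        simp only [SimpleGraph.mem_edgeFinset, SimpleGraph.mem_edgeSet, hH,
          SimpleGraph.comap_adj, hf, Fin.coe_succAboveEmb]
        rw [hx', hy']
        exact hxy
  have hinj : Function.Injective (Sym2.map f) := Sym2.map.injective f.injective
  have hsub : G.incidenceFinset v ⊆ G.edgeFinset := by
    intro e he
    rw [SimpleGraph.mem_incidenceFinset] at he
    exact SimpleGraph.mem_edgeFinset.2 (G.incidenceSet_subset v he)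
  have hcard : H.edgeFinset.card = G.edgeFinset.card - G.degree v := by
    rw [← Finset.card_image_of_injective _ hinj, himg,
      Finset.card_sdiff_of_subset hsub, G.card_incidenceFinset_eq_degree]
  calc G.edgeFinset.card - G.degree v = H.edgeFinset.card := hcard.symm
    _ = H.edgeSet.ncard := (Set.ncard_eq_toFinset_card' H.edgeSet).symm
    _ ≤ turanEx m a := le_turanEx H hHfree

theorem turan_ex_le_floor_prev (n a : ℕ) (ha : 3 ≤ a) (han : a < n) :
    (turanEx n a : ℤ) ≤ ⌊((n : ℚ) * (turanEx (n - 1) a : ℚ)) / ((n : ℚ) - 2)⌋ := by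
  classical
  obtain ⟨m, rfl⟩ : ∃ m, n = m + 1 := ⟨n - 1, by omega⟩
  have hm : 3 ≤ m := by omega
  obtain ⟨G, hGfree, hGcard⟩ := turanEx_mem (m + 1) a (by omega)
  set E : ℕ := turanEx (m + 1) a with hE
  set T : ℕ := turanEx m a with hT
  have hEdge : G.edgeFinset.card = E := by
    rw [← hGcard, Set.ncard_eq_toFinset_card' G.edgeSet]
    congr 1
  -- pick a vertex of minimum degree
  obtain ⟨v, -, hvmin⟩ := Finset.exists_min_image (Finset.univ : Finset (Fin (m + 1)))
    (fun u => G.degree u) ⟨0, Finset.mem_univ 0⟩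
  have hsum : (m + 1) * G.degree v ≤ 2 * E := by
    calc (m + 1) * G.degree v = ∑ _u : Fin (m + 1), G.degree v := by
          simp [Finset.sum_const, Finset.card_univ, mul_comm]
      _ ≤ ∑ u, G.degree u := Finset.sum_le_sum fun u _ => hvmin u (Finset.mem_univ u)
      _ = 2 * G.edgeFinset.card := G.sum_degrees_eq_twice_card_edges
      _ = 2 * E := by rw [hEdge]
  have hdel : E - G.degree v ≤ T := by
    rw [← hEdge]; exact delete_vertex_le G hGfree v
  have hEle : E ≤ T + G.degree v := by omega
  -- combine: (m - 1) * E ≤ (m + 1) * T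
  have hkey : (m - 1) * E ≤ (m + 1) * T := by
    have h1 : (m + 1) * E ≤ (m + 1) * T + (m + 1) * G.degree v := by
      calc (m + 1) * E ≤ (m + 1) * (T + G.degree v) := Nat.mul_le_mul_left _ hEle
        _ = (m + 1) * T + (m + 1) * G.degree v := by ring
    have h2 : (m + 1) * E ≤ (m + 1) * T + 2 * E := le_trans h1 (by omega)
    have h3 : (m + 1) * E = (m - 1) * E + 2 * E := by
      have h4 : m - 1 + 2 = m + 1 := by omega
      rw [← h4, add_mul]
    omega
  have hpos : (0 : ℚ) < (m : ℚ) + 1 - 2 := by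
    have h3 : (3 : ℚ) ≤ (m : ℚ) := by exact_mod_cast hm
    linarith
  rw [Int.le_floor, Nat.add_sub_cancel]
  push_cast
  rw [le_div_iff₀ hpos]
  have h4 : (((m - 1) * E : ℕ) : ℚ) ≤ (((m + 1) * T : ℕ) : ℚ) := by exact_mod_cast hkey
  push_cast [Nat.cast_sub (by omega : 1 ≤ m)] at h4
  linarith
end

section
/- For integers n ≥ a ≥ 3, the maximum number of edges ex(n,a) in a graph on n vertices with no clique of size a satisfies ex(n,a) ≤ ⌊(n/(n+2)) · ex(n+1,a)⌋. -/
/-!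
Let `G` be a `K_a`-free graph on `n` vertices with `m` edges and let `v` be a vertex of maximum
degree `Δ`, so that `n Δ ≥ 2 m`. Adding a new vertex with the same neighbourhood as `v` creates no
`a`-clique (the two twins are not adjacent) and gives a graph on `n + 1` vertices with
`m + Δ ≥ (n + 2) m / n` edges.
-/

open Finset

namespace SimpleGraph

variable {V W : Type*} {G : SimpleGraph V}

theorem IsNClique.image_of_comap [DecidableEq V] {f : W → V} {k : ℕ} {t : Finset W}
    (ht : (G.comap f).IsNClique k t) : G.IsNClique k (t.image f) := by
  have hinj : Set.InjOn f t := fun x hx y hy hxy => by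
    by_contra hne
    exact G.ne_of_adj (ht.1 hx hy hne) hxy
  refine ⟨?_, by rw [card_image_of_injOn hinj, ht.2]⟩
  rw [coe_image]
  rintro _ ⟨x, hx, rfl⟩ _ ⟨y, hy, rfl⟩ hne
  exact ht.1 hx hy (ne_of_apply_ne f hne)

theorem ncard_edgeSet_eq_card_edgeFinset [Fintype G.edgeSet] :
    G.edgeSet.ncard = #G.edgeFinset := by
  rw [← coe_edgeFinset, Set.ncard_coe_finset]

theorem two_mul_card_edgeFinset_le_card_mul_maxDegree [Fintype V] [DecidableRel G.Adj] :
    2 * #G.edgeFinset ≤ Fintype.card V * G.maxDegree := by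
  rw [← sum_degrees_eq_twice_card_edges, ← smul_eq_mul, ← card_univ]
  exact sum_le_card_nsmul _ _ _ fun v _ => G.degree_le_maxDegree v

theorem degree_eq_sum_ite [Fintype V] [DecidableRel G.Adj] (v : V) :
    G.degree v = ∑ w, if G.Adj v w then 1 else 0 := by
  rw [← card_neighborFinset_eq_degree, neighborFinset_eq_filter, card_filter]

variable {n : ℕ}

/-- The new vertex `Fin.last n` is a non-adjacent twin of `v`. -/
def addTwin (G : SimpleGraph (Fin n)) (v : Fin n) : SimpleGraph (Fin (n + 1)) :=
  G.comap (Fin.lastCases v id)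

instance (G : SimpleGraph (Fin n)) [DecidableRel G.Adj] (v : Fin n) :
    DecidableRel (G.addTwin v).Adj :=
  fun _ _ => inferInstanceAs (Decidable (G.Adj _ _))

variable {G : SimpleGraph (Fin n)} {v : Fin n} {k : ℕ}

theorem CliqueFree.addTwin (hG : G.CliqueFree k) (v : Fin n) : (G.addTwin v).CliqueFree k :=
  fun _ ht => hG _ ht.image_of_comap

variable [DecidableRel G.Adj]

theorem degree_addTwin_castSucc (i : Fin n) :
    (G.addTwin v).degree i.castSucc = G.degree i + if G.Adj i v then 1 else 0 := by
  rw [degree_eq_sum_ite, degree_eq_sum_ite, Fin.sum_univ_castSucc]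
  simp [addTwin]

theorem degree_addTwin_last : (G.addTwin v).degree (Fin.last n) = G.degree v := by
  rw [degree_eq_sum_ite, degree_eq_sum_ite, Fin.sum_univ_castSucc]
  simp [addTwin]

theorem card_edgeFinset_addTwin :
    #(G.addTwin v).edgeFinset = #G.edgeFinset + G.degree v := by
  have hsum : ∑ i, (if G.Adj i v then 1 else 0) = G.degree v := by
    simp_rw [degree_eq_sum_ite, G.adj_comm]
  have hdouble : 2 * #(G.addTwin v).edgeFinset = 2 * #G.edgeFinset + 2 * G.degree v :=
    calc 2 * #(G.addTwin v).edgeFinset = ∑ x, (G.addTwin v).degree x :=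
          (sum_degrees_eq_twice_card_edges _).symm
      _ = ∑ i, (G.degree i + if G.Adj i v then 1 else 0) + G.degree v := by
          simp [Fin.sum_univ_castSucc, degree_addTwin_castSucc, degree_addTwin_last]
      _ = 2 * #G.edgeFinset + 2 * G.degree v := by
          rw [sum_add_distrib, sum_degrees_eq_twice_card_edges, hsum]
          ring
  omega

theorem add_two_mul_card_edgeFinset_le_mul_card_edgeFinset_addTwin
    (hv : G.maxDegree = G.degree v) :
    (n + 2) * #G.edgeFinset ≤ n * #(G.addTwin v).edgeFinset := by
  have := G.two_mul_card_edgeFinset_le_card_mul_maxDegree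
  rw [Fintype.card_fin, hv] at this
  rw [card_edgeFinset_addTwin]
  linarith

end SimpleGraph

open SimpleGraph

theorem ncard_edgeSet_le_turanEx {n a : ℕ} {G : SimpleGraph (Fin n)} (hG : G.CliqueFree a) :
    G.edgeSet.ncard ≤ turanEx n a := by
  refine le_csSup ⟨Nat.card (Sym2 (Fin n)), ?_⟩ ⟨G, hG, rfl⟩
  rintro _ ⟨H, -, rfl⟩
  exact Set.ncard_le_card _

theorem turanEx_le_of_forall {n a k : ℕ}
    (h : ∀ G : SimpleGraph (Fin n), G.CliqueFree a → G.edgeSet.ncard ≤ k) : turanEx n a ≤ k :=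
  csSup_le' <| by
    rintro _ ⟨G, hG, rfl⟩
    exact h G hG

theorem add_two_mul_turanEx_le (n a : ℕ) : (n + 2) * turanEx n a ≤ n * turanEx (n + 1) a := by
  -- `csSup_le'` needs a bound on each edge count itself, hence the detour through `/ (n + 2)`.
  rw [mul_comm, ← Nat.le_div_iff_mul_le (by omega)]
  refine turanEx_le_of_forall fun G hG => ?_
  classical
  rw [Nat.le_div_iff_mul_le (by omega), mul_comm, ncard_edgeSet_eq_card_edgeFinset]
  rcases isEmpty_or_nonempty (Fin n) with _ | _
  · simp [Finset.eq_empty_of_isEmpty G.edgeFinset]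
  obtain ⟨v, hv⟩ := G.exists_maximal_degree_vertex
  calc (n + 2) * #G.edgeFinset ≤ n * #(G.addTwin v).edgeFinset :=
        add_two_mul_card_edgeFinset_le_mul_card_edgeFinset_addTwin hv
    _ = n * (G.addTwin v).edgeSet.ncard := by rw [ncard_edgeSet_eq_card_edgeFinset]
    _ ≤ n * turanEx (n + 1) a := Nat.mul_le_mul_left _ (ncard_edgeSet_le_turanEx (hG.addTwin v))

theorem turan_ex_le_floor_next_general (n a : ℕ) :
    (turanEx n a : ℤ) ≤ ⌊((n : ℚ) * (turanEx (n + 1) a : ℚ)) / ((n : ℚ) + 2)⌋ := by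
  rw [Int.le_floor, le_div_iff₀ (by positivity), mul_comm]
  exact_mod_cast add_two_mul_turanEx_le n a

theorem turan_ex_le_floor_next (n a : ℕ) (ha : 3 ≤ a) (han : a ≤ n) :
    (turanEx n a : ℤ) ≤ ⌊((n : ℚ) * (turanEx (n + 1) a : ℚ)) / ((n : ℚ) + 2)⌋ :=
  turan_ex_le_floor_next_general n a
end

section
/- Define t_a^a = C(a,2) − 1 and t_a^{i+1} = ⌊((i+1)/(i-1)) · t_a^i⌋ for i ≥ a. Then for every integer n ≥ a ≥ 3, every K_a-free graph on n vertices has at most t_a^n edges. -/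
/-- Auxiliary recursion: `turanTAux a k` is `t_a^{a+k}` where
`t_a^a = C(a,2) - 1` and `t_a^{i+1} = ⌊((i+1)/(i-1)) · t_a^i⌋`. -/
def turanTAux (a : ℕ) : ℕ → ℕ
  | 0 => a.choose 2 - 1
  | k + 1 => ((a + k + 1) * turanTAux a k) / (a + k - 1)

/-- `turanT a n = t_a^n` for `n ≥ a`. -/
def turanT (a n : ℕ) : ℕ := turanTAux a (n - a)

/-!
The bound is an upper bound for the extremal number `ex(n, K_a)`. On `a` vertices a `K_a`-free
graph misses at least one edge, so `ex(a, K_a) ≤ C(a,2) - 1`. Averaging over the `n + 1`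
vertex-deleted subgraphs of a `K_a`-free graph on `n + 1` vertices, each edge is counted in
`n - 1` of them, so `(n - 1) · ex(n + 1, K_a) ≤ (n + 1) · ex(n, K_a)`; this is exactly the
recursion defining `t_a^n`, floor included, since `ex` is an integer.
-/

open Finset Fintype

namespace SimpleGraph

variable {W : Type*}

theorem extremalNumber_card_le_choose_two_sub_one [Fintype W] (H : SimpleGraph W) :
    extremalNumber (card W) H ≤ (card W).choose 2 - 1 := by
  classical
  rw [extremalNumber_le_iff]
  intro G _ hG
  have hG_lt : G < ⊤ := lt_top_iff_ne_top.2 fun hG_top ↦ hG (hG_top ▸ .of_le le_top)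
  have := card_lt_card (edgeFinset_ssubset_edgeFinset.2 hG_lt)
  rw [card_edgeFinset_top_eq_card_choose_two] at this
  omega

theorem extremalNumber_succ_mul_le (H : SimpleGraph W) (n : ℕ) :
    (n - 1) * extremalNumber (n + 1) H ≤ (n + 1) * extremalNumber n H := by
  rcases lt_or_ge n 2 with hn | hn
  · interval_cases n <;> simp
  have h := antitoneOn_extremalNumber_div_choose_two H hn (hn.trans n.le_succ) n.le_succ
  rw [div_le_div_iff₀ (mod_cast Nat.choose_pos (hn.trans n.le_succ))
    (mod_cast Nat.choose_pos hn), Nat.cast_choose_two, Nat.cast_choose_two] at h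
  rw [← Nat.cast_le (α := ℝ), ← mul_le_mul_iff_right₀ (by positivity : (0 : ℝ) < n / 2)]
  push_cast [Nat.cast_sub (by omega : 1 ≤ n)] at h ⊢
  linarith

end SimpleGraph

open SimpleGraph

theorem extremalNumber_top_le_turanTAux {a : ℕ} (ha : 2 ≤ a) (k : ℕ) :
    extremalNumber (a + k) (⊤ : SimpleGraph (Fin a)) ≤ turanTAux a k := by
  induction k with
  | zero =>
    simpa [turanTAux] using extremalNumber_card_le_choose_two_sub_one (⊤ : SimpleGraph (Fin a))
  | succ k ih =>
    rw [turanTAux, Nat.le_div_iff_mul_le (by omega), mul_comm, ← add_assoc]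
    calc (a + k - 1) * extremalNumber (a + k + 1) (⊤ : SimpleGraph (Fin a))
        ≤ (a + k + 1) * extremalNumber (a + k) (⊤ : SimpleGraph (Fin a)) :=
          extremalNumber_succ_mul_le _ _
      _ ≤ (a + k + 1) * turanTAux a k := Nat.mul_le_mul_left _ ih

theorem cliqueFree_card_le_turanT (n a : ℕ) (ha : 3 ≤ a) (han : a ≤ n)
    (G : SimpleGraph (Fin n)) (hG : G.CliqueFree a) :
    G.edgeSet.ncard ≤ turanT a n := by
  classical
  obtain ⟨k, rfl⟩ := Nat.exists_eq_add_of_le han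
  have hfree : (⊤ : SimpleGraph (Fin a)).Free G := by
    rw [← cliqueFree_iff_top_free, Fintype.card_fin]
    exact hG
  rw [turanT, Nat.add_sub_cancel_left, ← coe_edgeFinset, Set.ncard_coe_finset]
  calc #G.edgeFinset ≤ extremalNumber (a + k) (⊤ : SimpleGraph (Fin a)) := by
        simpa using card_edgeFinset_le_extremalNumber hfree
    _ ≤ turanTAux a k := extremalNumber_top_le_turanTAux (by omega) k
end

section
/- Define t_a^a = C(a,2) − 1 and t_a^{i+1} = ⌊((i+1)/(i-1)) · t_a^i⌋ for i ≥ a. Then for every integer n ≥ a ≥ 3, the maximum number of edges in a K_a-free graph on n vertices equals t_a^n. Equivalently, ex(n,a) = ⌊ n/(n−2) ⌊ (n−1)/(n−3) ⌊ ⋯ ⌊ (a+1)/(a−1) · (C(a,2) − 1) ⌋ ⋯ ⌋ ⌋ ⌋. -/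
open Finset

private lemma succ_divmod {r : ℕ} (hr : 1 ≤ r) (n : ℕ) :
    ((n+1) / r = n / r + 1 ∧ (n+1) % r = 0 ∧ n % r = r - 1) ∨
    ((n+1) / r = n / r ∧ (n+1) % r = n % r + 1 ∧ n % r < r - 1) := by
  have h1 := Nat.div_add_mod n r
  have h2 := Nat.mod_lt n (show 0 < r by omega)
  by_cases h : n % r = r - 1
  · left
    have key : n + 1 = r * (n / r + 1) := by rw [Nat.mul_succ]; omega
    refine ⟨?_, ?_, h⟩
    · rw [key, Nat.mul_div_cancel_left _ (show 0 < r by omega)]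
    · rw [key, Nat.mul_mod_right]
  · right
    have key : (n+1) / r = n / r ∧ (n+1) % r = n % r + 1 := by
      rw [Nat.div_mod_unique (show 0 < r by omega)]
      constructor <;> omega
    exact ⟨key.1, key.2, by omega⟩

private lemma count_mod_eq {r : ℕ} (hr : 1 ≤ r) (c n : ℕ) (hc : c < r) :
    #((Finset.range n).filter (fun i => i % r = c)) = n / r + if c < n % r then 1 else 0 := by
  induction n with
  | zero => simp
  | succ n ih =>
    rw [Finset.range_add_one, Finset.filter_insert]
    rcases succ_divmod hr n with ⟨hd, hm, he⟩ | ⟨hd, hm, he⟩ <;>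
      [skip; skip] <;>
    · by_cases hn : n % r = c
      · rw [if_pos hn, Finset.card_insert_of_notMem (by simp), ih, hd, hm]
        split_ifs <;> omega
      · rw [if_neg hn, ih, hd, hm]
        split_ifs <;> omega

private lemma count_mod_lt {r : ℕ} (hr : 1 ≤ r) (t n : ℕ) (ht : t ≤ r) :
    #((Finset.range n).filter (fun i => i % r < t)) = t * (n / r) + min t (n % r) := by
  have hsplit : (Finset.range n).filter (fun i => i % r < t)
      = (Finset.range t).biUnion (fun c => (Finset.range n).filter (fun i => i % r = c)) := by
    ext i
    simp only [Finset.mem_filter, Finset.mem_biUnion, Finset.mem_range]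
    constructor
    · rintro ⟨hi, hlt⟩; exact ⟨i % r, hlt, hi, rfl⟩
    · rintro ⟨c, hc, hi, rfl⟩; exact ⟨hi, hc⟩
  rw [hsplit, Finset.card_biUnion]
  · have : ∀ c ∈ Finset.range t,
        #((Finset.range n).filter (fun i => i % r = c)) = n / r + if c < n % r then 1 else 0 := by
      intro c hc
      exact count_mod_eq hr c n (lt_of_lt_of_le (Finset.mem_range.mp hc) ht)
    rw [Finset.sum_congr rfl this, Finset.sum_add_distrib, Finset.sum_const, Finset.card_range,
      smul_eq_mul, Finset.sum_boole]
    have h2 : (Finset.range t).filter (fun c => c < n % r) = Finset.range (min t (n % r)) := by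
      ext x; simp only [Finset.mem_filter, Finset.mem_range, lt_min_iff]
    rw [h2, Finset.card_range, Nat.cast_id]
  · intro x hx y hy hxy
    simp only [Finset.disjoint_left, Finset.mem_filter]
    rintro i ⟨_, rfl⟩ ⟨_, h⟩
    exact hxy h

private lemma fin_filter_card {n : ℕ} (p : ℕ → Prop) [DecidablePred p] :
    #((Finset.univ : Finset (Fin n)).filter (fun w : Fin n => p ↑w))
      = #((Finset.range n).filter p) := by
  rw [← Nat.Iio_eq_range, ← Fin.map_valEmbedding_univ, Finset.filter_map, Finset.card_map]
  rfl

private lemma turan_char {r : ℕ} (hr : 1 ≤ r) (n : ℕ) :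
    2 * #(SimpleGraph.turanGraph n r).edgeFinset
      + (n * (n / r) + (n % r) * (n / r) + n % r) = n * n := by
  classical
  rw [← SimpleGraph.sum_degrees_eq_twice_card_edges]
  have hdeg : ∀ v : Fin n, (SimpleGraph.turanGraph n r).degree v
      + #((Finset.range n).filter (fun i => i % r = ↑v % r)) = n := by
    intro v
    rw [← fin_filter_card (fun i => i % r = ↑v % r)]
    rw [SimpleGraph.degree, SimpleGraph.neighborFinset_eq_filter]
    have : ∀ w : Fin n, (SimpleGraph.turanGraph n r).Adj v w ↔ ¬ (↑w % r = ↑v % r) := by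
      intro w
      constructor
      · intro h h2; exact h h2.symm
      · intro h h2; exact h h2.symm
    rw [Finset.filter_congr (fun w _ => this w)]
    rw [Finset.filter_not, Finset.card_sdiff_of_subset (Finset.filter_subset _ _)]
    have := Finset.card_filter_le (Finset.univ : Finset (Fin n))
        (fun w : Fin n => ↑w % r = ↑v % r)
    simp only [Finset.card_univ, Fintype.card_fin] at *
    omega
  have hsum : ∑ v : Fin n, ((SimpleGraph.turanGraph n r).degree v
      + #((Finset.range n).filter (fun i => i % r = ↑v % r))) = n * n := by
    rw [Finset.sum_congr rfl (fun v _ => hdeg v)]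
    simp [Finset.card_univ, mul_comm]
  rw [Finset.sum_add_distrib] at hsum
  have hcnt : ∑ v : Fin n, #((Finset.range n).filter (fun i => i % r = ↑v % r))
      = n * (n / r) + ((n % r) * (n / r) + n % r) := by
    have h1 : ∀ v : Fin n, #((Finset.range n).filter (fun i => i % r = ↑v % r))
        = n / r + if ↑v % r < n % r then 1 else 0 := by
      intro v
      exact count_mod_eq hr _ n (Nat.mod_lt _ (by omega))
    rw [Finset.sum_congr rfl (fun v _ => h1 v), Finset.sum_add_distrib, Finset.sum_const,
      Finset.card_univ, Fintype.card_fin, smul_eq_mul]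
    congr 1
    have h2 : ∑ v : Fin n, (if ↑v % r < n % r then 1 else 0)
        = ∑ i ∈ Finset.range n, (if i % r < n % r then 1 else 0) := by
      rw [Finset.sum_range fun i => if i % r < n % r then 1 else 0]
    rw [h2, Finset.sum_boole, Nat.cast_id,
      count_mod_lt hr _ n (Nat.le_of_lt (Nat.mod_lt _ (by omega)))]
    omega
  omega

private lemma key_div {r n A B : ℕ} (hr : 2 ≤ r) (hn : r + 1 ≤ n)
    (hA : 2 * A + (n * (n / r) + n % r * (n / r) + n % r) = n * n)
    (hB : 2 * B + ((n+1) * ((n+1) / r) + (n+1) % r * ((n+1) / r) + (n+1) % r)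
      = (n+1) * (n+1)) :
    B = ((n + 1) * A) / (n - 1) := by
  obtain ⟨t, rfl⟩ : ∃ t, r = t + 2 := ⟨r - 2, by omega⟩
  have hr0 : 0 < t + 2 := by omega
  have hq1 : 1 ≤ n / (t + 2) := (Nat.one_le_div_iff hr0).mpr (by omega)
  have hsd := succ_divmod (by omega : 1 ≤ t + 2) n
  obtain ⟨q, s, hq, hsv, hnd, hslt⟩ :
      ∃ q s, n / (t+2) = q ∧ n % (t+2) = s ∧ (t+2) * q + s = n ∧ s < t + 2 :=
    ⟨_, _, rfl, rfl, Nat.div_add_mod n (t+2), Nat.mod_lt n hr0⟩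
  rw [hq, hsv] at hA hsd
  rw [hq] at hq1
  have hstep : B + q = A + n := by
    rcases hsd with ⟨hd, hm, he⟩ | ⟨hd, hm, he⟩ <;> rw [hd, hm] at hB
    · have he' : s = t + 1 := by omega
      rw [he'] at hA hnd
      ring_nf at hA hB hnd ⊢
      omega
    · ring_nf at hA hB hnd ⊢
      omega
  have hqn : q ≤ n := by
    calc q ≤ (t+2) * q := Nat.le_mul_of_pos_left q (by omega)
    _ ≤ n := by omega
  have key2 : ((n + 1) * A) / (n - 1) = A + (n - q) := by
    apply Nat.div_eq_of_lt_le
    · zify [hqn, show 1 ≤ n by omega]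
      have hmul : (s : ℤ) * q ≤ (t + 1) * q := by
        have : s * q ≤ (t+1) * q := Nat.mul_le_mul_right q (by omega)
        exact_mod_cast this
      have hA' : 2 * (A:ℤ) + (n * q + s * q + s) = n * n := by exact_mod_cast hA
      have hnd' : ((t:ℤ)+2) * q + s = n := by exact_mod_cast hnd
      nlinarith [hmul, hA', hnd']
    · zify [hqn, show 1 ≤ n by omega]
      have hA' : 2 * (A:ℤ) + (n * q + s * q + s) = n * n := by exact_mod_cast hA
      have hnd' : ((t:ℤ)+2) * q + s = n := by exact_mod_cast hnd
      have hq1' : 1 ≤ (q:ℤ) := by exact_mod_cast hq1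
      rcases Nat.eq_zero_or_pos s with hs0 | hs1
      · have hq2 : 2 ≤ q := by
          rcases Nat.lt_or_ge q 2 with h | h
          · have : q = 1 := by omega
            rw [this, hs0] at hnd; simp at hnd; omega
          · exact h
        have hq2' : 2 ≤ (q:ℤ) := by exact_mod_cast hq2
        have hs0' : (s:ℤ) = 0 := by exact_mod_cast hs0
        nlinarith [hA', hnd']
      · have hsq : 1 ≤ (s:ℤ) * q := by
          have : 1 * 1 ≤ s * q := Nat.mul_le_mul hs1 hq1
          exact_mod_cast this
        have hs1' : 1 ≤ (s:ℤ) := by exact_mod_cast hs1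
        nlinarith [hA', hnd', hsq]
  omega

private lemma two_mul_choose_two (m : ℕ) : 2 * m.choose 2 = m * (m - 1) := by
  rcases m with _ | k
  · simp
  · rw [Nat.choose_two_right, Nat.succ_sub_one]
    have he : 2 ∣ (k+1) * k := by rw [mul_comm]; exact (Nat.even_mul_succ_self k).two_dvd
    rw [Nat.mul_div_cancel' he]

private lemma turanTAux_eq (a : ℕ) (ha : 3 ≤ a) (k : ℕ) :
    turanTAux a k = #(SimpleGraph.turanGraph (a + k) (a - 1)).edgeFinset := by
  have hr : 2 ≤ a - 1 := by omega
  induction k with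
  | zero =>
    have hchar := turan_char (show 1 ≤ a - 1 by omega) a
    have hdiv : a / (a - 1) = 1 := by
      apply Nat.div_eq_of_lt_le <;> omega
    have hmod : a % (a - 1) = 1 := by
      rw [Nat.mod_eq_sub_mod (by omega), show a - (a - 1) = 1 by omega,
        Nat.mod_eq_of_lt (by omega)]
    rw [hdiv, hmod] at hchar
    have hct := two_mul_choose_two a
    have hsq : a * (a - 1) + a = a * a := by
      obtain ⟨b, rfl⟩ : ∃ b, a = b + 3 := ⟨a - 3, by omega⟩
      rw [show b + 3 - 1 = b + 2 from rfl]; ring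
    show a.choose 2 - 1 = _
    simp only [Nat.add_zero]
    omega
  | succ k ih =>
    have hchar1 := turan_char (show 1 ≤ a - 1 by omega) (a + k)
    have hchar2 := turan_char (show 1 ≤ a - 1 by omega) (a + k + 1)
    rw [← ih] at hchar1
    show ((a + k + 1) * turanTAux a k) / (a + k - 1) = _
    have := key_div hr (show (a-1) + 1 ≤ a + k by omega) hchar1 hchar2
    rw [show a + (k + 1) = a + k + 1 from rfl]
    omega

theorem turanEx_eq_turanT (n a : ℕ) (ha : 3 ≤ a) (han : a ≤ n) :
    turanEx n a = turanT a n := by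
  classical
  have hr1 : 0 < a - 1 := by omega
  have hE : IsGreatest {m | ∃ G : SimpleGraph (Fin n), G.CliqueFree a ∧ G.edgeSet.ncard = m}
      (#(SimpleGraph.turanGraph n (a - 1)).edgeFinset) := by
    constructor
    · refine ⟨SimpleGraph.turanGraph n (a - 1), ?_, ?_⟩
      · have := SimpleGraph.turanGraph_cliqueFree (n := n) hr1
        rwa [show a - 1 + 1 = a by omega] at this
      · rw [← SimpleGraph.coe_edgeFinset, Set.ncard_coe_finset]
    · rintro m ⟨G, hGf, rfl⟩
      rw [← SimpleGraph.coe_edgeFinset, Set.ncard_coe_finset]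
      exact (SimpleGraph.isTuranMaximal_turanGraph (n := n) hr1).2 (G' := G)
        (by rwa [show a - 1 + 1 = a by omega])
  rw [turanEx, hE.csSup_eq, turanT]
  have := turanTAux_eq a ha (n - a)
  rw [show a + (n - a) = n by omega] at this
  exact this.symm
end

section
/- For integers n > a ≥ 3, ex(n+1,a) = ⌊((n+1)/(n−1)) · ex(n,a)⌋, where ex(m,a) is the maximum number of edges in a K_a-free graph on m vertices. -/
open Finset SimpleGraph

/-- count of `x < n` with `x % r = k` -/
def cnt (n r k : ℕ) : ℕ := #{x ∈ Finset.range n | x % r = k}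

lemma cnt_succ (n r k : ℕ) : cnt (n+1) r k = cnt n r k + if n % r = k then 1 else 0 := by
  unfold cnt
  rw [Finset.range_add_one, Finset.filter_insert]
  split <;> simp [Finset.card_insert_of_notMem]

lemma divmod_succ {r : ℕ} (hr : 2 ≤ r) (n : ℕ) :
    ((n+1)/r = n/r + 1 ∧ (n+1)%r = 0 ∧ n % r + 1 = r) ∨
    ((n+1)/r = n/r ∧ (n+1)%r = n % r + 1 ∧ n % r + 1 < r) := by
  have hmod : n % r < r := Nat.mod_lt _ (by omega)
  have h1 : (n+1) % r = (n % r + 1) % r := by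
    conv_lhs => rw [Nat.add_mod, Nat.mod_eq_of_lt (show 1 < r by omega)]
  rcases eq_or_ne (n % r + 1) r with h | h
  · left
    have hm0 : (n+1) % r = 0 := by rw [h1, h, Nat.mod_self]
    have hdvd : r ∣ n + 1 := Nat.dvd_of_mod_eq_zero hm0
    refine ⟨?_, hm0, h⟩
    rw [Nat.succ_div, if_pos hdvd]
  · right
    have hlt : n % r + 1 < r := by omega
    have hm : (n+1) % r = n % r + 1 := by rw [h1, Nat.mod_eq_of_lt hlt]
    have hndvd : ¬ r ∣ n + 1 := by
      intro hd
      rw [Nat.mod_eq_zero_of_dvd hd] at hm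
      omega
    refine ⟨?_, hm, hlt⟩
    rw [Nat.succ_div, if_neg hndvd]; omega

lemma cnt_closed {r : ℕ} (hr : 2 ≤ r) (n k : ℕ) (hk : k < r) :
    cnt n r k = n / r + if k < n % r then 1 else 0 := by
  induction n with
  | zero => simp [cnt]
  | succ n ih =>
    rw [cnt_succ, ih]
    rcases divmod_succ hr n with ⟨h1, h2, h3⟩ | ⟨h1, h2, h3⟩ <;>
      rw [h1, h2] <;> split_ifs <;> omega

lemma sum_cnt {r : ℕ} (hr : 2 ≤ r) (n : ℕ) :
    ∑ v ∈ Finset.range n, cnt n r (v % r) = (n/r)*n + (n%r)*((n/r)+1) := by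
  induction n with
  | zero => simp
  | succ n ih =>
    rw [Finset.range_add_one, Finset.sum_insert Finset.notMem_range_self,
      Finset.sum_congr rfl (fun v _ => cnt_succ n r (v % r)), Finset.sum_add_distrib, ih]
    have e2 : ∑ v ∈ Finset.range n, (if n % r = v % r then 1 else 0) = cnt n r (n % r) := by
      rw [cnt, Finset.card_filter]
      exact Finset.sum_congr rfl fun v _ => by simp [eq_comm]
    have e3 : cnt n r (n % r) = n / r := by
      rw [cnt_closed hr _ _ (Nat.mod_lt _ (by omega))]; simp
    have e4 : cnt (n+1) r (n % r) = n / r + 1 := by rw [cnt_succ, e3]; simp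
    rw [e2, e3, e4]
    have hn := Nat.div_add_mod n r
    rcases divmod_succ hr n with ⟨h1, h2, h3⟩ | ⟨h1, h2, h3⟩ <;> rw [h1, h2]
    · have hn2 : n = (n % r + 1)*(n/r) + n % r := by rw [h3]; omega
      set q := n / r; set s := n % r
      rw [hn2]; ring
    · ring

lemma card_filter_fin (n r k : ℕ) :
    #(Finset.univ.filter fun w : Fin n => w.val % r = k) = cnt n r k := by
  rw [cnt]
  refine Finset.card_bij (fun w _ => w.val) ?_ ?_ ?_
  · intro w hw
    simp only [Finset.mem_filter, Finset.mem_univ, true_and] at hw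
    simp [Finset.mem_range, w.isLt, hw]
  · intro a _ b _ h; exact Fin.val_injective h
  · intro x hx
    simp only [Finset.mem_filter, Finset.mem_range] at hx
    exact ⟨⟨x, hx.1⟩, by simp [hx.2], rfl⟩

lemma deg_add (n r : ℕ) (v : Fin n) :
    (turanGraph n r).degree v + cnt n r (v.val % r) = n := by
  rw [← card_filter_fin, ← SimpleGraph.card_neighborFinset_eq_degree,
    SimpleGraph.neighborFinset_eq_filter]
  have : (Finset.univ.filter fun w : Fin n => w.val % r = v.val % r)
      = Finset.univ.filter fun w : Fin n => ¬ (turanGraph n r).Adj v w := by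
    apply Finset.filter_congr
    intro w _
    simp [SimpleGraph.turanGraph, eq_comm]
  rw [this, Finset.card_filter_add_card_filter_not]
  simp

lemma twice_card_edges {r : ℕ} (hr : 2 ≤ r) (n : ℕ) :
    2 * #(SimpleGraph.turanGraph n r).edgeFinset + ((n/r)*n + (n%r)*((n/r)+1)) = n*n := by
  have key : ∑ v : Fin n, ((turanGraph n r).degree v + cnt n r (v.val % r)) = n * n := by
    rw [Finset.sum_congr rfl (fun v _ => deg_add n r v), Finset.sum_const]
    simp [mul_comm]
  rw [Finset.sum_add_distrib, SimpleGraph.sum_degrees_eq_twice_card_edges,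
    Fin.sum_univ_eq_sum_range (fun i => cnt n r (i % r)) n, sum_cnt hr] at key
  exact key


lemma ncard_edgeSet (n : ℕ) (G : SimpleGraph (Fin n)) [DecidableRel G.Adj] :
    G.edgeSet.ncard = #G.edgeFinset := by
  rw [← SimpleGraph.coe_edgeFinset, Set.ncard_coe_finset]

lemma turanEx_eq_card' (n r : ℕ) (hr : 0 < r) :
    turanEx n (r + 1) = #(SimpleGraph.turanGraph n r).edgeFinset := by
  classical
  have hmax := SimpleGraph.isTuranMaximal_turanGraph (n := n) hr
  have hbound : ∀ m ∈ {m | ∃ G : SimpleGraph (Fin n), G.CliqueFree (r+1) ∧ G.edgeSet.ncard = m},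
      m ≤ #(SimpleGraph.turanGraph n r).edgeFinset := by
    rintro m ⟨G, hG, rfl⟩
    rw [ncard_edgeSet]
    exact hmax.2 hG
  have hmem : #(SimpleGraph.turanGraph n r).edgeFinset ∈
      {m | ∃ G : SimpleGraph (Fin n), G.CliqueFree (r+1) ∧ G.edgeSet.ncard = m} :=
    ⟨SimpleGraph.turanGraph n r, SimpleGraph.turanGraph_cliqueFree hr, ncard_edgeSet n _⟩
  exact le_antisymm (csSup_le ⟨_, hmem⟩ hbound) (le_csSup ⟨_, hbound⟩ hmem)

lemma key_ineq (r q s Q S n A B : ℕ) (hr : 2 ≤ r) (hn : r + 2 ≤ n)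
    (hqs : r*q + s = n) (hs : s < r)
    (hcase : (Q = q+1 ∧ S = 0 ∧ s+1 = r) ∨ (Q = q ∧ S = s+1 ∧ s+1 < r))
    (e1 : 2*A + (q*n + s*(q+1)) = n*n)
    (e2 : 2*B + (Q*(n+1) + S*(Q+1)) = (n+1)*(n+1)) :
    B*(n-1) ≤ (n+1)*A ∧ (n+1)*A + 1 ≤ (B+1)*(n-1) := by
  have h1n : 1 ≤ n := by omega
  -- q ≥ 1
  have hq1 : 1 ≤ q := by
    rcases Nat.eq_zero_or_pos q with h | h
    · subst h; simp at hqs; omega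
    · exact h
  -- if s = 0 then q ≥ 2
  have hq2 : s = 0 → 2 ≤ q := by
    intro h0
    subst h0
    by_contra hc
    have hq1' : q = 1 := by omega
    subst hq1'
    omega
  -- the main identity over ℤ
  have hid : ((n:ℤ)+1)*(2*A) = ((n:ℤ)-1)*(2*B) + 2*q*((r:ℤ)-1-s) := by
    rcases hcase with ⟨hQ, hS, hsr⟩ | ⟨hQ, hS, hsr⟩ <;> rw [hQ, hS] at e2
    · have hsr' : (s:ℤ) + 1 = r := by exact_mod_cast hsr
      have e1' : 2*(A:ℤ) + ((q:ℤ)*n + s*((q:ℤ)+1)) = (n:ℤ)*n := by exact_mod_cast e1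
      have e2' : 2*(B:ℤ) + (((q:ℤ)+1)*((n:ℤ)+1) + 0*(((q:ℤ)+1)+1)) = ((n:ℤ)+1)*((n:ℤ)+1) := by
        exact_mod_cast e2
      have hqs' : (r:ℤ)*q + s = n := by exact_mod_cast hqs
      linear_combination ((n:ℤ)+1)*e1' - ((n:ℤ)-1)*e2' - ((n:ℤ)+1)*hqs' - ((n:ℤ)+1)*(q:ℤ)*hsr' + 2*(q:ℤ)*hsr'
    · have e1' : 2*(A:ℤ) + ((q:ℤ)*n + s*((q:ℤ)+1)) = (n:ℤ)*n := by exact_mod_cast e1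
      have e2' : 2*(B:ℤ) + ((q:ℤ)*((n:ℤ)+1) + ((s:ℤ)+1)*((q:ℤ)+1)) = ((n:ℤ)+1)*((n:ℤ)+1) := by
        exact_mod_cast e2
      have hqs' : (r:ℤ)*q + s = n := by exact_mod_cast hqs
      linear_combination ((n:ℤ)+1)*e1' - ((n:ℤ)-1)*e2' - 2*hqs'
  -- nonnegativity and upper bound for the defect
  have hslt : (s:ℤ) ≤ (r:ℤ) - 1 := by
    have : (s:ℤ) < r := by exact_mod_cast hs
    linarith
  have hlow : 0 ≤ (q:ℤ)*((r:ℤ)-1-s) :=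
    mul_nonneg (by positivity) (by linarith)
  have hq1' : 1 ≤ (q:ℤ) := by exact_mod_cast hq1
  have hqsZ : (r:ℤ)*q + s = n := by exact_mod_cast hqs
  have hup : (q:ℤ)*((r:ℤ)-1-s) ≤ (n:ℤ) - 2 := by
    rcases Nat.eq_zero_or_pos s with h0 | hpos
    · have h2q : (2:ℤ) ≤ q := by exact_mod_cast hq2 h0
      have h0' : (s:ℤ) = 0 := by exact_mod_cast h0
      nlinarith
    · have hpos' : (1:ℤ) ≤ s := by exact_mod_cast hpos
      have h1 : (q:ℤ)*((r:ℤ)-1-s) ≤ (q:ℤ)*((r:ℤ)-2) := by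
        apply mul_le_mul_of_nonneg_left (by linarith) (by positivity)
      nlinarith
  constructor
  · zify [h1n]; linarith
  · zify [h1n]; linarith

theorem turanEx_succ_eq_floor (n a : ℕ) (ha : 3 ≤ a) (han : a < n) :
    (turanEx (n + 1) a : ℤ) = ⌊((n : ℚ) + 1) * (turanEx n a : ℚ) / ((n : ℚ) - 1)⌋ := by
  obtain ⟨r, rfl⟩ : ∃ r, a = r + 1 := ⟨a - 1, by omega⟩
  have hr : 2 ≤ r := by omega
  have hn : r + 2 ≤ n := by omega
  have hA : turanEx n (r+1) = #(SimpleGraph.turanGraph n r).edgeFinset :=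
    turanEx_eq_card' n r (by omega)
  have hB : turanEx (n+1) (r+1) = #(SimpleGraph.turanGraph (n+1) r).edgeFinset :=
    turanEx_eq_card' (n+1) r (by omega)
  set A := turanEx n (r+1) with hAdef
  set B := turanEx (n+1) (r+1) with hBdef
  have e1 := twice_card_edges hr n
  rw [← hA] at e1
  have e2 := twice_card_edges hr (n+1)
  rw [← hB] at e2
  have key := key_ineq r (n/r) (n%r) ((n+1)/r) ((n+1)%r) n A B hr hn
    (Nat.div_add_mod n r) (Nat.mod_lt _ (by omega)) (divmod_succ hr n) e1 e2
  have h1n : 1 ≤ n := by omega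
  have hden : (0:ℚ) < (n:ℚ) - 1 := by
    have : (4:ℚ) ≤ (n:ℚ) := by exact_mod_cast (show 4 ≤ n by omega)
    linarith
  have k1 : ((B*(n-1) : ℕ) : ℚ) ≤ (((n+1)*A : ℕ) : ℚ) := by exact_mod_cast key.1
  have k2 : (((n+1)*A + 1 : ℕ) : ℚ) ≤ (((B+1)*(n-1) : ℕ) : ℚ) := by exact_mod_cast key.2
  push_cast [Nat.cast_sub h1n] at k1 k2
  refine (Int.floor_eq_iff.mpr ⟨?_, ?_⟩).symm
  · rw [le_div_iff₀ hden]
    push_cast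
    linarith
  · rw [div_lt_iff₀ hden]
    push_cast
    linarith
end

section
/- For integers n ≥ a ≥ 3 with n ≡ 0 (mod a−1), the maximum number of edges in a K_a-free graph on n vertices equals (1 − 1/(a−1))·n²/2. -/
open Finset SimpleGraph

/-- Residue class size: when `r ∣ n`, the number of `w : Fin n` with `w % r = c` (for `c < r`)
is `n / r`. -/
lemma card_residue_class {n r : ℕ} (hr : 0 < r) (hd : r ∣ n) (c : ℕ) (hc : c < r) :
    #(Finset.univ.filter fun w : Fin n => (w : ℕ) % r = c) = n / r := by
  have key : ∀ i, i ∈ Finset.range (n / r) → c + r * i < n := by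
    intro i hi
    have hi' : i < n / r := Finset.mem_range.mp hi
    calc c + r * i < r + r * i := by omega
      _ = r * (i + 1) := by ring
      _ ≤ r * (n / r) := Nat.mul_le_mul_left r hi'
      _ = n := Nat.mul_div_cancel' hd
  rw [← Finset.card_range (n / r)]
  refine Finset.card_bij' (fun w _ => (w : ℕ) / r) (fun i hi => ⟨c + r * i, key i hi⟩)
    ?_ ?_ ?_ ?_
  · intro w hw
    simp only [Finset.mem_filter, Finset.mem_univ, true_and] at hw
    simp only [Finset.mem_range]
    have : (w : ℕ) < r * (n / r) := by rw [Nat.mul_div_cancel' hd]; exact w.isLt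
    exact Nat.div_lt_of_lt_mul (by omega)
  · intro i hi
    simp only [Finset.mem_filter, Finset.mem_univ, true_and]
    simp [Nat.add_mul_mod_self_left, Nat.mod_eq_of_lt hc]
  · intro w hw
    simp only [Finset.mem_filter, Finset.mem_univ, true_and] at hw
    apply Fin.ext
    simp only
    conv_rhs => rw [← Nat.div_add_mod (w : ℕ) r]
    omega
  · intro i hi
    simp only
    rw [Nat.add_mul_div_left _ _ hr, Nat.div_eq_of_lt hc, zero_add]

/-- Degree of every vertex in the Turán graph when `r ∣ n`. -/
lemma turanGraph_degree {n r : ℕ} (hr : 0 < r) (hd : r ∣ n) (v : Fin n) :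
    (turanGraph n r).degree v = n - n / r := by
  rw [degree, neighborFinset_eq_filter]
  have hset : (Finset.univ.filter fun w : Fin n => (turanGraph n r).Adj v w)
      = (Finset.univ.filter fun w : Fin n => (w : ℕ) % r = (v : ℕ) % r)ᶜ := by
    ext w
    simp only [Finset.mem_filter, Finset.mem_univ, true_and, Finset.mem_compl, turanGraph]
    exact Iff.trans (Finset.mem_filter.trans (and_iff_right (Finset.mem_univ _))) ne_comm
  rw [hset, Finset.card_compl, card_residue_class hr hd _ (Nat.mod_lt _ hr)]
  simp

/-- Edge count of the Turán graph when `r ∣ n`. -/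
lemma turanGraph_card_edges {n r : ℕ} (hr : 0 < r) (hd : r ∣ n) :
    2 * #(turanGraph n r).edgeFinset = n * (n - n / r) := by
  rw [← sum_degrees_eq_twice_card_edges]
  rw [Finset.sum_congr rfl fun v _ => turanGraph_degree hr hd v]
  simp [mul_comm]

theorem turanEx_eq_turan_bound (n a : ℕ) (ha : 3 ≤ a) (han : a ≤ n)
    (hmod : (a - 1) ∣ n) :
    (turanEx n a : ℚ) = (1 - 1 / ((a : ℚ) - 1)) * (n : ℚ) ^ 2 / 2 := by
  classical
  set r := a - 1 with hrdef
  have hr : 0 < r := by omega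
  have hra : r + 1 = a := by omega
  have hmem : #(turanGraph n r).edgeFinset ∈
      {m | ∃ G : SimpleGraph (Fin n), G.CliqueFree a ∧ G.edgeSet.ncard = m} := by
    refine ⟨turanGraph n r, ?_, ?_⟩
    · rw [← hra]; exact turanGraph_cliqueFree hr
    · rw [Set.ncard_eq_toFinset_card']; congr 1
  have hub : ∀ m ∈ {m | ∃ G : SimpleGraph (Fin n), G.CliqueFree a ∧ G.edgeSet.ncard = m},
      m ≤ #(turanGraph n r).edgeFinset := by
    rintro m ⟨H, hHcf, rfl⟩
    have := (isTuranMaximal_turanGraph (n := n) hr).2 (G' := H) (by rwa [hra])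
    rw [Set.ncard_eq_toFinset_card']
    convert this using 2
    congr 1
  have hsup : turanEx n a = #(turanGraph n r).edgeFinset := by
    rw [turanEx]
    exact le_antisymm (csSup_le ⟨_, hmem⟩ hub) (le_csSup ⟨_, hub⟩ hmem)
  have hcount := turanGraph_card_edges (n := n) hr hmod
  have hdiv : (↑(n / r) : ℚ) = (n : ℚ) / r := by
    rw [Nat.cast_div hmod (by exact_mod_cast hr.ne')]
  have hle : n / r ≤ n := Nat.div_le_self n r
  have hq : 2 * (#(turanGraph n r).edgeFinset : ℚ) = n * (n - n / (r : ℚ)) := by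
    rw [← hdiv]
    have h2 : ((n - n / r : ℕ) : ℚ) = (n : ℚ) - ↑(n / r) := by
      rw [Nat.cast_sub hle]
    rw [← h2]
    exact_mod_cast hcount
  have hrq : ((a : ℚ) - 1) = (r : ℚ) := by
    have : (r : ℚ) = (a : ℚ) - 1 := by
      rw [hrdef, Nat.cast_sub (by omega)]; norm_num
    linarith
  rw [hsup, hrq]
  have hrne : (r : ℚ) ≠ 0 := by exact_mod_cast hr.ne'
  field_simp at hq ⊢
  linarith [hq]
end

section
/- Let r ≤ a be positive integers. Then the identity C(a,r) − 1 + Σ_{α=1}^{a−r} C(α+r−2, α)·α = (a−r+1)·C(a−1, r−1) − 1 holds. -/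
/-!
Write `r = s + 1` and `a = n + s + 1`. Each summand is `α * C(α + s - 1, α) = s * C(α + s - 1, s)`,
so by the hockey-stick identity the sum is `s * C(n + s, s + 1)`. Pascal's rule together with
`(s + 1) * C(n + s, s + 1) = n * C(n + s, s)` then gives
`C(n + s + 1, s + 1) + s * C(n + s, s + 1) = (n + 1) * C(n + s, s)`.
-/

open Finset

namespace Nat

theorem add_choose_succ_mul_succ (b s : ℕ) :
    (b + s).choose (b + 1) * (b + 1) = s * (b + s).choose s := by
  rw [choose_succ_right_eq, choose_symm_add, Nat.add_sub_cancel_left, mul_comm]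

theorem sum_range_add_choose_of_lt (n s : ℕ) :
    ∑ b ∈ range n, (b + s).choose s = (n + s).choose (s + 1) := by
  cases n with
  | zero => simp
  | succ n => rw [sum_range_add_choose, add_right_comm]

theorem sum_range_add_choose_succ_mul_succ (n s : ℕ) :
    ∑ b ∈ range n, (b + s).choose (b + 1) * (b + 1) = s * (n + s).choose (s + 1) := by
  simp_rw [add_choose_succ_mul_succ, ← mul_sum, sum_range_add_choose_of_lt]

theorem choose_succ_add_mul_choose (n s : ℕ) :
    (n + s + 1).choose (s + 1) + s * (n + s).choose (s + 1) = (n + 1) * (n + s).choose s := by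
  have pascal := choose_succ_succ' (n + s) s
  have absorb := choose_succ_right_eq (n + s) s
  rw [Nat.add_sub_cancel] at absorb
  rw [pascal]
  linarith

end Nat

theorem binomial_identity (r a : ℕ) (hr : 1 ≤ r) (hra : r ≤ a) :
    a.choose r - 1 + ∑ α ∈ Finset.Icc 1 (a - r), (α + r - 2).choose α * α =
      (a - r + 1) * (a - 1).choose (r - 1) - 1 := by
  obtain ⟨s, rfl⟩ : ∃ s, r = s + 1 := ⟨r - 1, by omega⟩
  obtain ⟨n, rfl⟩ : ∃ n, a = n + s + 1 := ⟨a - s - 1, by omega⟩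
  have hsum : ∑ α ∈ Icc 1 n, (α + (s + 1) - 2).choose α * α = s * (n + s).choose (s + 1) := by
    rw [← Ico_add_one_right_eq_Icc, sum_Ico_eq_sum_range, Nat.add_sub_cancel,
      ← Nat.sum_range_add_choose_succ_mul_succ]
    refine sum_congr rfl fun b _ => ?_
    rw [show 1 + b + (s + 1) - 2 = b + s by omega, add_comm 1 b]
  have hpos : 0 < (n + s + 1).choose (s + 1) := Nat.choose_pos (by omega)
  have key := Nat.choose_succ_add_mul_choose n s
  simp only [show n + s + 1 - (s + 1) = n by omega, Nat.add_sub_cancel, hsum]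
  omega
end

section
/- Let 2 ≤ r < a and l ≥ 2a−1. Any sub-hypergraph of the hyperwheel ^rW_l^a (viewed as an r-uniform hypergraph) containing no complete r-uniform hyperclique K_a^r has at most C(a−1, r−1)·(l−1) − ⌈(l−1)/(a−r+1)⌉ hyperedges. -/
/-- The `a`-clique of the hyperwheel on `l` vertices (vertices `0,…,l-2` on the cycle,
center `l-1`) starting at cycle vertex `i`: `{i, i+1, …, i+a-2 (mod l-1)} ∪ {l-1}`. -/
def wheelClique (l a i : ℕ) : Finset ℕ :=
  insert (l - 1) ((Finset.range (a - 1)).image fun k => (i + k) % (l - 1))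

/-- The hyperedges of the `r`-uniform hyperwheel `^rW_l^a`: all `r`-subsets of the
cliques `wheelClique l a i` for `i` a cycle vertex. -/
def wheelEdges (r a l : ℕ) : Finset (Finset ℕ) :=
  (Finset.range (l - 1)).biUnion fun i => (wheelClique l a i).powersetCard r

/-- An `r`-uniform edge set is `K_a^r`-free if no `a`-set has all its `r`-subsets present. -/
def HyperCliqueFree (F : Finset (Finset ℕ)) (a r : ℕ) : Prop :=
  ¬ ∃ S : Finset ℕ, S.card = a ∧ S.powersetCard r ⊆ F

/-!
Call the `r`-subsets of `Q_j := wheelClique l a j` that contain the cycle vertex `j` the edges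
rooted at `j`; there are `C(a-1, r-1)` of them. Every wheel edge is rooted at its first cycle
vertex, so if `D` is the set of cycle vertices `j` not all of whose rooted edges lie in `F`, then
`|F| ≤ C(a-1, r-1)(l-1) - |D|`. An `r`-subset of `Q_i` is rooted at one of `i, …, i+a-r`, so if
none of these were in `D`, `Q_i` would span a `K_a^r` in `F`. Thus `D` meets every `a-r+1`
consecutive cycle vertices, whence `|D| ≥ ⌈(l-1)/(a-r+1)⌉`.
-/

open Finset

lemma injOn_add_mod_range (t n : ℕ) : Set.InjOn (fun i => (i + t) % n) (range n) := by
  intro i hi j hj hij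
  have hmod : i ≡ j [MOD n] := Nat.ModEq.add_right_cancel' t hij
  rwa [Nat.ModEq, Nat.mod_eq_of_lt (mem_range.mp hi), Nat.mod_eq_of_lt (mem_range.mp hj)] at hmod

lemma le_card_mul_of_forall_exists_add_mod_mem {n w : ℕ} {D : Finset ℕ}
    (hD : ∀ i < n, ∃ t ≤ w, (i + t) % n ∈ D) : n ≤ #D * (w + 1) := by
  have hcover : range n ⊆ (range (w + 1)).biUnion fun t => {i ∈ range n | (i + t) % n ∈ D} := by
    intro i hi
    obtain ⟨t, ht, hiD⟩ := hD i (mem_range.mp hi)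
    exact mem_biUnion.mpr ⟨t, mem_range.mpr (by omega), mem_filter.mpr ⟨hi, hiD⟩⟩
  have hfiber (t : ℕ) : #{i ∈ range n | (i + t) % n ∈ D} ≤ #D :=
    card_le_card_of_injOn _ (fun i hi => (mem_filter.mp hi).2)
      ((injOn_add_mod_range t n).mono (filter_subset _ _))
  calc n = #(range n) := (card_range n).symm
    _ ≤ #(range (w + 1)) * #D := (card_le_card hcover).trans
        (card_biUnion_le_card_mul _ _ _ fun t _ => hfiber t)
    _ = #D * (w + 1) := by rw [card_range, mul_comm]

lemma card_add_card_filter_not_subset_le {ι α : Type*} [DecidableEq α] {s : Finset ι}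
    {A : ι → Finset α} {F : Finset α} {C : ℕ} (hF : F ⊆ s.biUnion A) (hA : ∀ j ∈ s, #(A j) ≤ C) :
    #F + #{j ∈ s | ¬ A j ⊆ F} ≤ #s * C := by
  have hF' : F ⊆ s.biUnion fun j => F ∩ A j := by
    intro e he
    obtain ⟨j, hj, hej⟩ := mem_biUnion.mp (hF he)
    exact mem_biUnion.mpr ⟨j, hj, mem_inter.mpr ⟨he, hej⟩⟩
  have hterm (j : ι) (hj : j ∈ s) : #(F ∩ A j) + (if ¬ A j ⊆ F then 1 else 0) ≤ C := by
    by_cases hsub : A j ⊆ F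
    · simpa [hsub] using (card_le_card inter_subset_right).trans (hA j hj)
    · have hlt : #(F ∩ A j) < #(A j) := card_lt_card <|
        ssubset_of_subset_of_ne inter_subset_right fun h => hsub (h ▸ inter_subset_left)
      simp only [hsub, not_false_eq_true, if_true]
      linarith [hA j hj]
  calc #F + #{j ∈ s | ¬ A j ⊆ F}
      ≤ ∑ j ∈ s, #(F ∩ A j) + ∑ j ∈ s, (if ¬ A j ⊆ F then 1 else 0) := by
        rw [card_filter]; exact Nat.add_le_add_right ((card_le_card hF').trans card_biUnion_le) _
    _ ≤ ∑ _j ∈ s, C := by rw [← sum_add_distrib]; exact sum_le_sum hterm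
    _ = #s * C := by rw [sum_const, smul_eq_mul]

def wheelRootedEdges (r a l j : ℕ) : Finset (Finset ℕ) :=
  {e ∈ (wheelClique l a j).powersetCard r | {j} ⊆ e}

lemma card_wheelClique {a l : ℕ} (ha : 0 < a) (hal : a ≤ l) (i : ℕ) :
    #(wheelClique l a i) = a := by
  have hinj : Set.InjOn (fun k => (i + k) % (l - 1)) (range (a - 1)) := fun x hx y hy hxy =>
    injOn_add_mod_range i (l - 1) (range_subset_range.mpr (by omega) hx)
      (range_subset_range.mpr (by omega) hy) (by simpa only [add_comm] using hxy)
  have hcenter : l - 1 ∉ (range (a - 1)).image fun k => (i + k) % (l - 1) := by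
    simp only [mem_image, mem_range, not_exists, not_and]
    exact fun k hk => (Nat.mod_lt _ (by omega)).ne
  rw [wheelClique, card_insert_of_notMem hcenter, card_image_of_injOn hinj, card_range]
  omega

lemma mem_wheelClique_self {a l j : ℕ} (ha : 2 ≤ a) (hj : j < l - 1) : j ∈ wheelClique l a j :=
  mem_insert_of_mem <|
    mem_image.mpr ⟨0, mem_range.mpr (by omega), by rw [add_zero, Nat.mod_eq_of_lt hj]⟩

lemma card_wheelRootedEdges {r a l j : ℕ} (hr : 1 ≤ r) (ha : 2 ≤ a) (hal : a ≤ l)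
    (hj : j < l - 1) :
    #(wheelRootedEdges r a l j) = (a - 1).choose (r - 1) := by
  rw [wheelRootedEdges, card_filter_powersetCard_subset _ _ _
    (singleton_subset_iff.mpr (mem_wheelClique_self ha hj)) (by rwa [card_singleton]),
    card_wheelClique (by omega) hal, card_singleton]

lemma add_mod_mem_wheelClique_add_mod {a l i t k : ℕ} (htk : t ≤ k) (hk : k < a - 1) :
    (i + k) % (l - 1) ∈ wheelClique l a ((i + t) % (l - 1)) := by
  refine mem_insert_of_mem (mem_image.mpr ⟨k - t, mem_range.mpr (by omega), ?_⟩)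
  rw [Nat.mod_add_mod]
  congr 1
  omega

lemma exists_mem_wheelRootedEdges_add_mod {r a l i : ℕ} (hr : 2 ≤ r) {e : Finset ℕ}
    (he : e ∈ (wheelClique l a i).powersetCard r) :
    ∃ t ≤ a - r, e ∈ wheelRootedEdges r a l ((i + t) % (l - 1)) := by
  obtain ⟨heS, hcard⟩ := mem_powersetCard.mp he
  set T := {k ∈ range (a - 1) | (i + k) % (l - 1) ∈ e}
  have heT : e ⊆ insert (l - 1) (T.image fun k => (i + k) % (l - 1)) := by
    intro x hx
    rcases mem_insert.mp (heS hx) with rfl | hx'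
    · exact mem_insert_self _ _
    · obtain ⟨k, hk, rfl⟩ := mem_image.mp hx'
      exact mem_insert_of_mem (mem_image_of_mem _ (mem_filter.mpr ⟨hk, hx⟩))
  have hTcard : r - 1 ≤ #T := by
    have := (card_le_card heT).trans <|
      (card_insert_le _ _).trans (Nat.add_le_add_right card_image_le 1)
    omega
  have hT : T.Nonempty := card_pos.mp (by omega)
  obtain ⟨-, hte⟩ := mem_filter.mp (T.min'_mem hT)
  have hTIco : T ⊆ Ico (T.min' hT) (a - 1) := fun k hk =>
    mem_Ico.mpr ⟨T.min'_le k hk, mem_range.mp (mem_filter.mp hk).1⟩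
  have ht : T.min' hT ≤ a - r := by
    have := card_le_card hTIco
    rw [Nat.card_Ico] at this
    omega
  refine ⟨T.min' hT, ht, mem_filter.mpr ⟨mem_powersetCard.mpr ⟨fun x hx => ?_, hcard⟩,
    singleton_subset_iff.mpr hte⟩⟩
  rcases mem_insert.mp (heT hx) with rfl | hx'
  · exact mem_insert_self _ _
  · obtain ⟨k, hk, rfl⟩ := mem_image.mp hx'
    exact add_mod_mem_wheelClique_add_mod (T.min'_le k hk) (mem_range.mp (mem_filter.mp hk).1)

lemma wheelEdges_subset_biUnion_wheelRootedEdges {r a l : ℕ} (hr : 2 ≤ r) :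
    wheelEdges r a l ⊆ (range (l - 1)).biUnion (wheelRootedEdges r a l) := by
  intro e he
  obtain ⟨i, hi, heS⟩ := mem_biUnion.mp he
  obtain ⟨t, -, het⟩ := exists_mem_wheelRootedEdges_add_mod hr heS
  exact mem_biUnion.mpr ⟨_, mem_range.mpr (Nat.mod_lt _ (Nat.zero_lt_of_lt (mem_range.mp hi))), het⟩

lemma HyperCliqueFree.exists_not_wheelRootedEdges_subset {F : Finset (Finset ℕ)} {r a l : ℕ}
    (hfree : HyperCliqueFree F a r) (hr : 2 ≤ r) (ha : 0 < a) (hal : a ≤ l) (i : ℕ) :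
    ∃ t ≤ a - r, ¬ wheelRootedEdges r a l ((i + t) % (l - 1)) ⊆ F := by
  by_contra! hfull
  refine hfree ⟨wheelClique l a i, card_wheelClique ha hal i, fun e he => ?_⟩
  obtain ⟨t, ht, het⟩ := exists_mem_wheelRootedEdges_add_mod hr he
  exact hfull t ht het

theorem wheel_cliqueFree_card_le (r a l : ℕ) (hr : 2 ≤ r) (hra : r < a) (hl : 2 * a - 1 ≤ l)
    (F : Finset (Finset ℕ)) (hF : F ⊆ wheelEdges r a l) (hfree : HyperCliqueFree F a r) :
    F.card ≤ (a - 1).choose (r - 1) * (l - 1) - (l - 1 + (a - r)) / (a - r + 1) := by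
  have hn : 0 < l - 1 := by omega
  set D := {j ∈ range (l - 1) | ¬ wheelRootedEdges r a l j ⊆ F}
  have hcount : #F + #D ≤ (a - 1).choose (r - 1) * (l - 1) := by
    have := card_add_card_filter_not_subset_le
      (hF.trans (wheelEdges_subset_biUnion_wheelRootedEdges hr))
      fun j hj => (card_wheelRootedEdges (by omega) (by omega) (by omega) (mem_range.mp hj)).le
    rwa [card_range, mul_comm] at this
  have hcover : l - 1 ≤ #D * (a - r + 1) := le_card_mul_of_forall_exists_add_mod_mem fun i _ => by
    obtain ⟨t, ht, hnot⟩ :=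
      hfree.exists_not_wheelRootedEdges_subset (l := l) hr (by omega) (by omega) i
    exact ⟨t, ht, mem_filter.mpr ⟨mem_range.mpr (Nat.mod_lt _ hn), hnot⟩⟩
  have hceil : (l - 1 + (a - r)) / (a - r + 1) ≤ #D := by
    rw [Nat.div_le_iff_le_mul_add_pred (by omega), mul_comm]
    omega
  omega
end

section
/- Let 2 ≤ r < a and l ≥ 2a−1. There exists a K_a^r-free subset of the hyperedges of the hyperwheel ^rW_l^a with exactly C(a−1, r−1)·(l−1) − ⌈(l−1)/(a−r+1)⌉ hyperedges; hence the bound C(a−1, r−1)·(l−1) − ⌈(l−1)/(a−r+1)⌉ on K_a^r-free edge sets in ^rW_l^a is tight. -/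
namespace WheelTight

/-- cyclic window of length `m` starting at `p`, modulo `n` -/
def win (n p m : ℕ) : Finset ℕ := (Finset.range m).image fun k => (p + k) % n

lemma mem_win {n p m x : ℕ} : x ∈ win n p m ↔ ∃ k, k < m ∧ x = (p + k) % n := by
  simp [win, eq_comm]

lemma win_lt {n p m x : ℕ} (hn : 0 < n) (hx : x ∈ win n p m) : x < n := by
  obtain ⟨k, _, rfl⟩ := mem_win.1 hx; exact Nat.mod_lt _ hn

lemma modeq_bounded {n a b : ℕ} (h : a ≡ b [MOD n]) (ha : a < 2 * n) (hb : b < 2 * n) :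
    a = b ∨ a + n = b ∨ b + n = a := by
  unfold Nat.ModEq at h
  rcases lt_or_ge a n with h1 | h1 <;> rcases lt_or_ge b n with h2 | h2
  · left; rwa [Nat.mod_eq_of_lt h1, Nat.mod_eq_of_lt h2] at h
  · right; left
    rw [Nat.mod_eq_of_lt h1, Nat.mod_eq_sub_mod h2, Nat.mod_eq_of_lt (by omega)] at h
    omega
  · right; right
    rw [Nat.mod_eq_of_lt h2, Nat.mod_eq_sub_mod h1, Nat.mod_eq_of_lt (by omega)] at h
    omega
  · left
    rw [Nat.mod_eq_sub_mod h1, Nat.mod_eq_sub_mod h2, Nat.mod_eq_of_lt (by omega),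
      Nat.mod_eq_of_lt (by omega)] at h
    omega

lemma modeq_eq {n a b : ℕ} (h : a ≡ b [MOD n]) (ha : a < n) (hb : b < n) : a = b := by
  have := modeq_bounded h (by omega) (by omega); omega

lemma win_inj {n p k1 k2 : ℕ} (h1 : k1 < n) (h2 : k2 < n)
    (h : (p + k1) % n = (p + k2) % n) : k1 = k2 :=
  modeq_eq (Nat.ModEq.add_left_cancel' p h) h1 h2

lemma card_win {n p m : ℕ} (hm : m ≤ n) : (win n p m).card = m := by
  rw [win, Finset.card_image_of_injOn, Finset.card_range]
  intro k1 hk1 k2 hk2 h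
  simp only [Finset.coe_range, Set.mem_Iio] at hk1 hk2
  exact win_inj (lt_of_lt_of_le hk1 hm) (lt_of_lt_of_le hk2 hm) h

lemma win_mono {n p m1 m2 : ℕ} (h : m1 ≤ m2) : win n p m1 ⊆ win n p m2 :=
  Finset.image_subset_image (Finset.range_subset_range.2 h)

lemma win_shift_subset {n q δ k w : ℕ} (h : δ + k ≤ w) : win n ((q + δ) % n) k ⊆ win n q w := by
  intro x hx
  obtain ⟨t, ht, rfl⟩ := mem_win.1 hx
  rw [Nat.mod_add_mod]
  exact mem_win.2 ⟨δ + t, by omega, by rw [Nat.add_assoc]⟩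

/-- all `r`-subsets fit into a cyclic window of length `w` -/
def Hfit (n w r : ℕ) (U : Finset ℕ) : Prop :=
  ∀ X ⊆ U, X.card = r → ∃ p < n, X ⊆ win n p w

lemma pairP {n w r : ℕ} (hr : 2 ≤ r) (hwn : w ≤ n) {U : Finset ℕ}
    (hU : U ⊆ Finset.range n) (hUr : r ≤ U.card) (H : Hfit n w r U) :
    ∀ y ∈ U, ∀ z ∈ U, y ≤ z → z - y < w ∨ n - (z - y) < w := by
  intro y hy z hz hyz
  have hsub : ({y, z} : Finset ℕ) ⊆ U := by
    intro x hx; simp only [Finset.mem_insert, Finset.mem_singleton] at hx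
    rcases hx with rfl | rfl <;> assumption
  have hc2 : ({y, z} : Finset ℕ).card ≤ r :=
    le_trans ((Finset.card_insert_le _ _).trans (by simp)) hr
  obtain ⟨X, hX1, hX2, hX3⟩ := Finset.exists_subsuperset_card_eq hsub hc2 hUr
  obtain ⟨p, hp, hXw⟩ := H X hX2 hX3
  obtain ⟨ky, hky, hkyE⟩ := mem_win.1 (hXw (hX1 (show y ∈ ({y, z} : Finset ℕ) by simp)))
  obtain ⟨kz, hkz, hkzE⟩ := mem_win.1 (hXw (hX1 (show z ∈ ({y, z} : Finset ℕ) by simp)))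
  have hyn : y < n := by simpa using hU hy
  have hzn : z < n := by simpa using hU hz
  have e1 : (p + ky) % n = y := hkyE.symm
  have e2 : (p + kz) % n = z := hkzE.symm
  have hme : ky + z ≡ kz + y [MOD n] := by
    apply Nat.ModEq.add_left_cancel' p
    show (p + (ky + z)) % n = (p + (kz + y)) % n
    rw [show p + (ky + z) = p + ky + z by ring, show p + (kz + y) = p + kz + y by ring,
      ← Nat.mod_add_mod, ← Nat.mod_add_mod (p + kz), e1, e2, Nat.add_comm y z]
  rcases modeq_bounded hme (by omega) (by omega) with h | h | h <;> omega

lemma bound {n w r : ℕ} (hr : 2 ≤ r) (hrw : r ≤ w) (hnw : 2 * w ≤ n) {U : Finset ℕ}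
    (hU : U ⊆ Finset.range n) (h0 : 0 ∈ U) (hUr : r ≤ U.card) (H : Hfit n w r U) :
    U.card ≤ w := by
  have hw : 0 < w := by omega
  have P := pairP hr (by omega) hU hUr H
  have hLH : ∀ y ∈ U, y < w ∨ n - w < y := by
    intro y hy
    have := P 0 h0 y hy (Nat.zero_le y)
    omega
  have : U.card ≤ (Finset.range w).card := by
    refine Finset.card_le_card_of_injOn (fun u => if u < w then u else u - (n - w)) ?_ ?_
    · intro u hu
      have hun : u < n := by simpa using hU hu
      have := hLH u hu
      simp only [Finset.mem_coe, Finset.mem_range]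
      split <;> omega
    · intro u hu v hv huv
      simp only [Finset.mem_coe] at hu hv
      have hun : u < n := by simpa using hU hu
      have hvn : v < n := by simpa using hU hv
      have hu' := hLH u hu
      have hv' := hLH v hv
      have huv' : (if u < w then u else u - (n - w)) = (if v < w then v else v - (n - w)) := huv
      split_ifs at huv' with h1 h2 h3
      · exact huv'
      · exfalso; have := P u hu v hv (by omega); omega
      · exfalso; have := P v hv u hu (by omega); omega
      · omega
  simpa using this

lemma key {n w r : ℕ} (hr : 2 ≤ r) (hrw : r ≤ w) (hnw : 2 * w ≤ n)
    (hx : ¬(r = 2 ∧ n = 2 * w)) {U : Finset ℕ} (hU : U ⊆ Finset.range n)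
    (h0 : 0 ∈ U) (hcard : U.card = w) (H : Hfit n w r U) :
    ∃ q < n, U = win n q w := by
  classical
  have hw : 2 ≤ w := le_trans hr hrw
  have hn : 0 < n := by omega
  have P := pairP hr (by omega) hU (by omega) H
  have hLH : ∀ y ∈ U, y < w ∨ n - w < y := by
    intro y hy
    have := P 0 h0 y hy (Nat.zero_le y)
    omega
  set A := U.filter (fun u => u < w) with hA
  set B := U.filter (fun u => ¬ u < w) with hB
  set E := B.image (fun b => b - (n - w)) with hE
  have hmemA : ∀ k, k ∈ A ↔ (k ∈ U ∧ k < w) := by intro k; simp [hA]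
  have hmemE : ∀ k, k ∈ E → (n - w + k ∈ U ∧ k < w ∧ n - w < n - w + k) := by
    intro k hk
    simp only [hE, Finset.mem_image] at hk
    obtain ⟨b, hb, rfl⟩ := hk
    simp only [hB, Finset.mem_filter] at hb
    have hbn : b < n := by simpa using hU hb.1
    have hlh := hLH b hb.1
    have hbw : n - w < b := by omega
    have heq : n - w + (b - (n - w)) = b := by omega
    rw [heq]
    exact ⟨hb.1, by omega, by omega⟩
  have hdisj : Disjoint A E := by
    rw [Finset.disjoint_left]
    intro k hkA hkE
    obtain ⟨hbU, hkw, _⟩ := hmemE k hkE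
    have h1 := (hmemA k).1 hkA
    have := P k h1.1 (n - w + k) hbU (by omega)
    omega
  have hcardE : E.card = B.card := by
    apply Finset.card_image_of_injOn
    intro b1 h1 b2 h2 he
    have he' : b1 - (n - w) = b2 - (n - w) := he
    simp only [Finset.mem_coe, hB, Finset.mem_filter] at h1 h2
    have hb1 : b1 < n := by simpa using hU h1.1
    have hb2 : b2 < n := by simpa using hU h2.1
    have := hLH b1 h1.1
    have := hLH b2 h2.1
    omega
  have hABcard : A.card + B.card = w := by
    have := Finset.card_filter_add_card_filter_not (s := U) (fun u => u < w)
    rw [hcard] at this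
    rw [hA, hB]
    exact this
  have hAE : A ∪ E = Finset.range w := by
    apply Finset.eq_of_subset_of_card_le
    · intro k hk
      rcases Finset.mem_union.1 hk with h | h
      · exact Finset.mem_range.2 ((hmemA k).1 h).2
      · exact Finset.mem_range.2 (hmemE k h).2.1
    · rw [Finset.card_union_of_disjoint hdisj, Finset.card_range]; omega
  have hAll : ∀ k, k < w → k ∈ A ∨ k ∈ E := by
    intro k hk
    have : k ∈ A ∪ E := hAE ▸ Finset.mem_range.2 hk
    exact Finset.mem_union.1 this
  have h0A : (0 : ℕ) ∈ A := (hmemA 0).2 ⟨h0, by omega⟩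
  have h0E : (0 : ℕ) ∉ E := fun h => (Finset.disjoint_left.1 hdisj h0A) h
  have hstep : ∀ i ∈ E, ∀ j, i < j → j < w → j ∈ E := by
    rcases Nat.lt_or_ge (2 * w) n with hbig | hsmall
    · have step1 : ∀ i, i ∈ E → i + 1 < w → i + 1 ∈ E := by
        intro i hiE hi1
        by_contra hni
        have hjA : i + 1 ∈ A := (hAll (i + 1) hi1).resolve_right hni
        have hjU : i + 1 ∈ U := ((hmemA _).1 hjA).1
        obtain ⟨hyU, hiw, _⟩ := hmemE i hiE
        have := P (i + 1) hjU (n - w + i) hyU (by omega)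
        omega
      intro i hiE j hij hjw
      have main : ∀ j, i + 1 ≤ j → j < w → j ∈ E := by
        intro j hj
        induction j, hj using Nat.le_induction with
        | base => intro h; exact step1 i hiE h
        | succ j hj ih => intro h; exact step1 j (ih (by omega)) (by omega)
      exact main j (by omega) hjw
    · have hn2 : n = 2 * w := by omega
      have hr3 : 3 ≤ r := by
        rcases Nat.lt_or_ge r 3 with h | h
        · exact absurd ⟨by omega, hn2⟩ hx
        · exact h
      intro i hiE j hij hjw
      by_contra hnj
      have hjA : j ∈ A := (hAll j hjw).resolve_right hnj
      have hjU : j ∈ U := ((hmemA _).1 hjA).1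
      obtain ⟨hyU, hiw, hipos⟩ := hmemE i hiE
      have hine : i ≠ 0 := fun h => h0E (h ▸ hiE)
      have hsub3 : ({0, j, n - w + i} : Finset ℕ) ⊆ U := by
        intro x hx
        simp only [Finset.mem_insert, Finset.mem_singleton] at hx
        rcases hx with rfl | rfl | rfl <;> assumption
      have hc3 : ({0, j, n - w + i} : Finset ℕ).card ≤ r := by
        refine le_trans (Finset.card_insert_le _ _) ?_
        refine le_trans (Nat.add_le_add_right (Finset.card_insert_le _ _) 1) ?_
        simp only [Finset.card_singleton]
        omega
      obtain ⟨X, hX1, hX2, hX3⟩ := Finset.exists_subsuperset_card_eq hsub3 hc3 (by omega)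
      obtain ⟨p, hp, hXw⟩ := H X hX2 hX3
      obtain ⟨k0, hk0, h0e⟩ := mem_win.1 (hXw (hX1 (show 0 ∈ ({0, j, n - w + i} : Finset ℕ) by simp)))
      obtain ⟨k1, hk1, h1e⟩ := mem_win.1 (hXw (hX1 (show j ∈ ({0, j, n - w + i} : Finset ℕ) by simp)))
      obtain ⟨k2, hk2, h2e⟩ := mem_win.1 (hXw (hX1 (show n - w + i ∈ ({0, j, n - w + i} : Finset ℕ) by simp)))
      have m0 : (p + k0) % n = 0 := h0e.symm
      have m1 : (p + k1) % n = j := h1e.symm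
      have m2 : (p + k2) % n = n - w + i := h2e.symm
      have c1 : k1 ≡ k0 + j [MOD n] := by
        apply Nat.ModEq.add_left_cancel' p
        show (p + k1) % n = (p + (k0 + j)) % n
        rw [m1, show p + (k0 + j) = p + k0 + j by ring, ← Nat.mod_add_mod, m0,
          Nat.zero_add, Nat.mod_eq_of_lt (by omega)]
      have hk0j : k1 = k0 + j := modeq_eq c1 (by omega) (by omega)
      have c2 : k2 ≡ k0 + (n - w + i) [MOD n] := by
        apply Nat.ModEq.add_left_cancel' p
        show (p + k2) % n = (p + (k0 + (n - w + i))) % n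
        rw [m2, show p + (k0 + (n - w + i)) = p + k0 + (n - w + i) by ring,
          ← Nat.mod_add_mod, m0, Nat.zero_add, Nat.mod_eq_of_lt (by omega)]
      rcases modeq_bounded c2 (by omega) (by omega) with h | h | h <;> omega
  by_cases hEe : E = ∅
  · refine ⟨0, by omega, ?_⟩
    have hAw : A = Finset.range w := by rw [← hAE, hEe, Finset.union_empty]
    have hUw : Finset.range w = U := by
      apply Finset.eq_of_subset_of_card_le
      · rw [← hAw, hA]; exact Finset.filter_subset _ _
      · rw [hcard, Finset.card_range]
    have hwin0 : win n 0 w = Finset.range w := by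
      ext x
      simp only [mem_win, Finset.mem_range]
      constructor
      · rintro ⟨k, hk, rfl⟩
        rw [Nat.zero_add, Nat.mod_eq_of_lt (by omega)]; exact hk
      · intro hxw
        exact ⟨x, hxw, by rw [Nat.zero_add, Nat.mod_eq_of_lt (by omega)]⟩
    rw [hwin0, hUw]
  · have hEne : E.Nonempty := Finset.nonempty_iff_ne_empty.2 hEe
    set t := E.min' hEne with htdef
    have htE : t ∈ E := E.min'_mem hEne
    have htmin : ∀ k ∈ E, t ≤ k := fun k hk => E.min'_le k hk
    have htw : t < w := (hmemE t htE).2.1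
    have ht1 : t ≠ 0 := fun h => h0E (h ▸ htE)
    refine ⟨n - w + t, by omega, ?_⟩
    symm
    apply Finset.eq_of_subset_of_card_le
    · intro x hx
      obtain ⟨k, hk, rfl⟩ := mem_win.1 hx
      by_cases hcase : t + k < w
      · have hkE : t + k ∈ E := by
          rcases Nat.eq_zero_or_pos k with rfl | hkpos
          · simpa using htE
          · exact hstep t htE (t + k) (by omega) hcase
        have hmem := (hmemE _ hkE).1
        have h1 : n - w + t + k = n - w + (t + k) := by omega
        rw [h1, Nat.mod_eq_of_lt (by omega)]
        exact hmem
      · have hvE : t + k - w ∉ E := fun h => absurd (htmin _ h) (by omega)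
        have hvA : t + k - w ∈ A := (hAll _ (by omega)).resolve_right hvE
        have hvU := ((hmemA _).1 hvA).1
        have h1 : n - w + t + k = n + (t + k - w) := by omega
        rw [h1, Nat.add_mod_left, Nat.mod_eq_of_lt (by omega)]
        exact hvU
    · rw [card_win (by omega), hcard]


lemma Hfit_image {n w r : ℕ} (hn : 0 < n) {U : Finset ℕ} (hU : U ⊆ Finset.range n) (t : ℕ)
    (H : Hfit n w r U) : Hfit n w r (U.image fun x => (x + t) % n) := by
  classical
  intro X' hX' hcX'
  obtain ⟨X, hXU, rfl⟩ := Finset.subset_image_iff.1 hX'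
  have hinj : Set.InjOn (fun x => (x + t) % n) ↑X := by
    intro x hx y hy h
    have h' : x + t ≡ y + t [MOD n] := h
    exact modeq_eq (Nat.ModEq.add_right_cancel' t h')
      (by simpa using hU (hXU (Finset.mem_coe.1 hx)))
      (by simpa using hU (hXU (Finset.mem_coe.1 hy)))
  have hcX : X.card = r := by
    rwa [Finset.card_image_of_injOn hinj] at hcX'
  obtain ⟨p, hp, hXw⟩ := H X hXU hcX
  refine ⟨(p + t) % n, Nat.mod_lt _ hn, ?_⟩
  intro x' hx'
  obtain ⟨x, hx, rfl⟩ := Finset.mem_image.1 hx'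
  obtain ⟨k, hk, rfl⟩ := mem_win.1 (hXw hx)
  rw [Nat.mod_add_mod]
  refine mem_win.2 ⟨k, hk, ?_⟩
  rw [Nat.mod_add_mod, show p + t + k = p + k + t by ring]

lemma bound' {n w r : ℕ} (hr : 2 ≤ r) (hrw : r ≤ w) (hnw : 2 * w ≤ n) {U : Finset ℕ}
    (hU : U ⊆ Finset.range n) (hUr : r ≤ U.card) (H : Hfit n w r U) : U.card ≤ w := by
  classical
  have hn : 0 < n := by omega
  obtain ⟨u0, hu0⟩ : U.Nonempty := Finset.card_pos.1 (by omega)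
  have hu0n : u0 < n := by simpa using hU hu0
  set U' := U.image (fun x => (x + (n - u0)) % n) with hU'def
  have hU'r : U' ⊆ Finset.range n := by
    intro x hx
    obtain ⟨y, _, rfl⟩ := Finset.mem_image.1 hx
    exact Finset.mem_range.2 (Nat.mod_lt _ hn)
  have h0' : 0 ∈ U' := by
    refine Finset.mem_image.2 ⟨u0, hu0, ?_⟩
    rw [show u0 + (n - u0) = n by omega, Nat.mod_self]
  have hinj : Set.InjOn (fun x => (x + (n - u0)) % n) ↑U := by
    intro x hx y hy h
    have h' : x + (n - u0) ≡ y + (n - u0) [MOD n] := h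
    exact modeq_eq (Nat.ModEq.add_right_cancel' _ h')
      (by simpa using hU (Finset.mem_coe.1 hx)) (by simpa using hU (Finset.mem_coe.1 hy))
  have hcard' : U'.card = U.card := Finset.card_image_of_injOn hinj
  have := bound hr hrw hnw hU'r h0' (by omega) (Hfit_image hn hU _ H)
  omega

lemma struct {n w r : ℕ} (hr : 2 ≤ r) (hrw : r ≤ w) (hnw : 2 * w ≤ n)
    (hx : ¬(r = 2 ∧ n = 2 * w)) {U : Finset ℕ} (hU : U ⊆ Finset.range n)
    (hcard : U.card = w) (H : Hfit n w r U) : ∃ q < n, U = win n q w := by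
  classical
  have hn : 0 < n := by omega
  obtain ⟨u0, hu0⟩ : U.Nonempty := Finset.card_pos.1 (by omega)
  have hu0n : u0 < n := by simpa using hU hu0
  set U' := U.image (fun x => (x + (n - u0)) % n) with hU'def
  have hU'r : U' ⊆ Finset.range n := by
    intro x hx
    obtain ⟨y, _, rfl⟩ := Finset.mem_image.1 hx
    exact Finset.mem_range.2 (Nat.mod_lt _ hn)
  have h0' : 0 ∈ U' := by
    refine Finset.mem_image.2 ⟨u0, hu0, ?_⟩
    rw [show u0 + (n - u0) = n by omega, Nat.mod_self]
  have hinj : Set.InjOn (fun x => (x + (n - u0)) % n) ↑U := by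
    intro x hx y hy h
    have h' : x + (n - u0) ≡ y + (n - u0) [MOD n] := h
    exact modeq_eq (Nat.ModEq.add_right_cancel' _ h')
      (by simpa using hU (Finset.mem_coe.1 hx)) (by simpa using hU (Finset.mem_coe.1 hy))
  have hcard' : U'.card = w := by rw [Finset.card_image_of_injOn hinj, hcard]
  obtain ⟨q, hq, hq'⟩ := key hr hrw hnw hx hU'r h0' hcard' (Hfit_image hn hU _ H)
  refine ⟨(q + u0) % n, Nat.mod_lt _ hn, ?_⟩
  have hgf : ∀ x ∈ U, ((x + (n - u0)) % n + u0) % n = x := by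
    intro x hxU
    have hxn : x < n := by simpa using hU hxU
    rw [Nat.mod_add_mod, show x + (n - u0) + u0 = x + n by omega, Nat.add_mod_right,
      Nat.mod_eq_of_lt hxn]
  have himg : U'.image (fun x => (x + u0) % n) = U := by
    ext x
    simp only [Finset.mem_image]
    constructor
    · rintro ⟨y, hy, rfl⟩
      obtain ⟨z, hz, rfl⟩ := Finset.mem_image.1 hy
      rw [hgf z hz]; exact hz
    · intro hx
      exact ⟨(x + (n - u0)) % n, Finset.mem_image_of_mem _ hx, hgf x hx⟩
  have hwing : (win n q w).image (fun x => (x + u0) % n) = win n ((q + u0) % n) w := by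
    ext x
    simp only [Finset.mem_image, mem_win]
    constructor
    · rintro ⟨y, ⟨k, hk, rfl⟩, rfl⟩
      refine ⟨k, hk, ?_⟩
      rw [Nat.mod_add_mod, Nat.mod_add_mod, show q + u0 + k = q + k + u0 by ring]
    · rintro ⟨k, hk, rfl⟩
      refine ⟨(q + k) % n, ⟨k, hk, rfl⟩, ?_⟩
      rw [Nat.mod_add_mod, Nat.mod_add_mod, show q + u0 + k = q + k + u0 by ring]
  rw [← himg, hq', hwing]

lemma special {n w r : ℕ} (hr2 : r = 2) (hnw : n = 2 * w) (hw : 2 ≤ w) {U : Finset ℕ}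
    (hU : U ⊆ Finset.range n) (hcard : U.card = w) (H : Hfit n w r U) :
    0 ∈ U ∨ w ∈ U := by
  classical
  have hn : 0 < n := by omega
  have P := pairP (by omega) (by omega) hU (by omega) H
  have hmapsto : ∀ u ∈ U, (if u < w then u else u - w) ∈ Finset.range w := by
    intro u hu
    have : u < n := by simpa using hU hu
    simp only [Finset.mem_range]
    split <;> omega
  have hinj : Set.InjOn (fun u => if u < w then u else u - w) ↑U := by
    intro u hu v hv huv
    replace hu : u ∈ U := Finset.mem_coe.1 hu
    replace hv : v ∈ U := Finset.mem_coe.1 hv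
    have hun : u < n := by simpa using hU hu
    have hvn : v < n := by simpa using hU hv
    have huv' : (if u < w then u else u - w) = (if v < w then v else v - w) := huv
    split_ifs at huv' with h1 h2 h3
    · exact huv'
    · exfalso; have := P u hu v hv (by omega); omega
    · exfalso; have := P v hv u hu (by omega); omega
    · omega
  have himg : U.image (fun u => if u < w then u else u - w) = Finset.range w := by
    apply Finset.eq_of_subset_of_card_le
    · intro x hx
      obtain ⟨u, hu, rfl⟩ := Finset.mem_image.1 hx
      exact hmapsto u hu
    · rw [Finset.card_range, Finset.card_image_of_injOn hinj, hcard]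
  have h0 : (0 : ℕ) ∈ U.image (fun u => if u < w then u else u - w) := by
    rw [himg]; exact Finset.mem_range.2 (by omega)
  obtain ⟨u, hu, hu0⟩ := Finset.mem_image.1 h0
  have hun : u < n := by simpa using hU hu
  have hu0' : (if u < w then u else u - w) = 0 := hu0
  split_ifs at hu0' with h
  · left; rwa [← hu0']
  · right; have : u = w := by omega
    rwa [← this]

lemma jhit {n s : ℕ} (hs : 0 < s) (hsn : s ≤ n) {q : ℕ} (hq : q < n) :
    ∃ c < (n + s - 1) / s, ∃ δ < s, c * s = (q + δ) % n := by
  set m := (n + s - 1) / s with hm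
  have hdm := Nat.div_add_mod (n + s - 1) s
  rw [← hm] at hdm
  have hrem : (n + s - 1) % s < s := Nat.mod_lt _ hs
  have hnm : n ≤ s * m := by generalize hX : s * m = X at hdm ⊢; omega
  set c := (q + s - 1) / s with hc
  have hdc := Nat.div_add_mod (q + s - 1) s
  rw [← hc] at hdc
  have hremc : (q + s - 1) % s < s := Nat.mod_lt _ hs
  have h1 : q ≤ s * c := by generalize hX : s * c = X at hdc ⊢; omega
  have h2 : s * c ≤ q + s - 1 := by generalize hX : s * c = X at hdc ⊢; omega
  by_cases hcn : s * c < n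
  · refine ⟨c, Nat.lt_of_mul_lt_mul_left (lt_of_lt_of_le hcn hnm), s * c - q,
      by generalize hX : s * c = X at h1 h2 ⊢; omega, ?_⟩
    rw [show q + (s * c - q) = s * c by generalize hX : s * c = X at h1 ⊢; omega,
      Nat.mod_eq_of_lt hcn, Nat.mul_comm]
  · refine ⟨0, ?_, n - q, by generalize hX : s * c = X at h2 hcn ⊢; omega, ?_⟩
    · rcases Nat.eq_zero_or_pos m with hm0 | hm0
      · rw [hm0, Nat.mul_zero] at hnm; omega
      · exact hm0
    · rw [show q + (n - q) = n by omega, Nat.mod_self, Nat.zero_mul]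


lemma insert_cancel {x : ℕ} {s t : Finset ℕ} (h : insert x s = insert x t)
    (hs : x ∉ s) (ht : x ∉ t) : s = t := by
  rw [← Finset.erase_insert hs, h, Finset.erase_insert ht]

lemma shift_injOn {n i u : ℕ} (hu : u < n) {B : Finset ℕ} (hB : B ⊆ Finset.Icc 1 u) :
    Set.InjOn (fun b => (i + b) % n) ↑B := by
  intro b1 h1 b2 h2 h
  have e1 := Finset.mem_Icc.1 (hB (Finset.mem_coe.1 h1))
  have e2 := Finset.mem_Icc.1 (hB (Finset.mem_coe.1 h2))
  exact win_inj (by omega) (by omega) h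

lemma base_not_mem {n i u : ℕ} (hin : i < n) {B : Finset ℕ} (hB : B ⊆ Finset.Icc 1 u)
    (hu : u < n) : i ∉ B.image (fun b => (i + b) % n) := by
  intro h
  obtain ⟨b, hb, heq⟩ := Finset.mem_image.1 h
  have hbI := Finset.mem_Icc.1 (hB hb)
  have h2 : (i + b) % n = (i + 0) % n := by
    rw [heq, Nat.add_zero, Nat.mod_eq_of_lt hin]
  have : b = 0 := win_inj (by omega) (by omega) h2
  omega

lemma base_eq {n i1 i2 u : ℕ} (hn1 : i1 < n) (hn2 : i2 < n) {B1 B2 : Finset ℕ}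
    (hB1 : B1 ⊆ Finset.Icc 1 u) (hB2 : B2 ⊆ Finset.Icc 1 u) (hu : 2 * u < n)
    (h : insert i1 (B1.image fun b => (i1 + b) % n) = insert i2 (B2.image fun b => (i2 + b) % n)) :
    i1 = i2 := by
  have hm2 : i2 ∈ insert i1 (B1.image fun b => (i1 + b) % n) := by
    rw [h]; exact Finset.mem_insert_self _ _
  have hm1 : i1 ∈ insert i2 (B2.image fun b => (i2 + b) % n) := by
    rw [← h]; exact Finset.mem_insert_self _ _
  rcases Finset.mem_insert.1 hm2 with h2 | h2
  · exact h2.symm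
  rcases Finset.mem_insert.1 hm1 with h1 | h1
  · exact h1
  exfalso
  obtain ⟨b1, hb1, he1⟩ := Finset.mem_image.1 h2
  obtain ⟨b2, hb2, he2⟩ := Finset.mem_image.1 h1
  have hb1I := Finset.mem_Icc.1 (hB1 hb1)
  have hb2I := Finset.mem_Icc.1 (hB2 hb2)
  -- i2 = (i1 + b1) % n, i1 = (i2 + b2) % n  ⇒ i1 = (i1 + (b1 + b2)) % n ⇒ b1 + b2 = 0
  have hkey : (i1 + (b1 + b2)) % n = (i1 + 0) % n := by
    rw [show i1 + (b1 + b2) = i1 + b1 + b2 from by ring, ← Nat.mod_add_mod, he1, he2,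
      Nat.add_zero, Nat.mod_eq_of_lt hn1]
  have : b1 + b2 = 0 := win_inj (by omega) (by omega) hkey
  omega

lemma image_eq_of_shift {n i u : ℕ} (hu : u < n) {B1 B2 : Finset ℕ}
    (hB1 : B1 ⊆ Finset.Icc 1 u) (hB2 : B2 ⊆ Finset.Icc 1 u)
    (h : B1.image (fun b => (i + b) % n) = B2.image (fun b => (i + b) % n)) : B1 = B2 := by
  ext b
  constructor
  · intro hb
    have : (i + b) % n ∈ B2.image (fun b => (i + b) % n) := by
      rw [← h]; exact Finset.mem_image_of_mem _ hb
    obtain ⟨b', hb', he⟩ := Finset.mem_image.1 this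
    have e1 := Finset.mem_Icc.1 (hB1 hb)
    have e2 := Finset.mem_Icc.1 (hB2 hb')
    have : b' = b := win_inj (by omega) (by omega) he
    rwa [← this]
  · intro hb
    have : (i + b) % n ∈ B1.image (fun b => (i + b) % n) := by
      rw [h]; exact Finset.mem_image_of_mem _ hb
    obtain ⟨b', hb', he⟩ := Finset.mem_image.1 this
    have e1 := Finset.mem_Icc.1 (hB2 hb)
    have e2 := Finset.mem_Icc.1 (hB1 hb')
    have : b' = b := win_inj (by omega) (by omega) he
    rwa [← this]


lemma wheelEdges_eq (r a l : ℕ) (hr : 2 ≤ r) (hra : r < a) (hl : 2 * a - 1 ≤ l) :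
    wheelEdges r a l =
      ((Finset.range (l - 1) ×ˢ (Finset.Icc 1 (a - 2)).powersetCard (r - 1)).image
          (fun ib => insert ib.1 (ib.2.image (fun b => (ib.1 + b) % (l - 1)))))
      ∪ ((Finset.range (l - 1) ×ˢ (Finset.Icc 1 (a - 2)).powersetCard (r - 2)).image
          (fun ib => insert (l - 1) (insert ib.1 (ib.2.image (fun b => (ib.1 + b) % (l - 1)))))) := by
  classical
  have hn0 : 0 < l - 1 := by omega
  have hwn : a - 1 ≤ l - 1 := by omega
  have hclique : ∀ i, wheelClique l a i = insert (l - 1) (win (l - 1) i (a - 1)) := fun i => rfl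
  ext E
  constructor
  · intro hE
    rw [wheelEdges, Finset.mem_biUnion] at hE
    obtain ⟨i0, hi0, hEp⟩ := hE
    rw [Finset.mem_powersetCard, hclique] at hEp
    obtain ⟨hEsub, hEcard⟩ := hEp
    rw [Finset.mem_range] at hi0
    set E' := E.erase (l - 1) with hE'def
    have hE'w : E' ⊆ win (l - 1) i0 (a - 1) := by
      intro x hx
      obtain ⟨hxne, hxE⟩ := Finset.mem_erase.1 hx
      rcases Finset.mem_insert.1 (hEsub hxE) with h | h
      · exact absurd h hxne
      · exact h
    set K := (Finset.range (a - 1)).filter (fun k => (i0 + k) % (l - 1) ∈ E') with hKdef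
    have hKchar : ∀ x, x ∈ E' ↔ ∃ k ∈ K, (i0 + k) % (l - 1) = x := by
      intro x
      constructor
      · intro hx
        obtain ⟨k, hk, rfl⟩ := mem_win.1 (hE'w hx)
        exact ⟨k, Finset.mem_filter.2 ⟨Finset.mem_range.2 hk, hx⟩, rfl⟩
      · rintro ⟨k, hk, rfl⟩
        exact (Finset.mem_filter.1 hk).2
    have hE'img : E' = K.image (fun k => (i0 + k) % (l - 1)) := by
      ext x
      rw [hKchar]
      simp [Finset.mem_image]
    have hKinj : Set.InjOn (fun k => (i0 + k) % (l - 1)) ↑K := by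
      intro k1 h1 k2 h2 h
      have hk1 : k1 < a - 1 := Finset.mem_range.1 (Finset.mem_filter.1 (Finset.mem_coe.1 h1)).1
      have hk2 : k2 < a - 1 := Finset.mem_range.1 (Finset.mem_filter.1 (Finset.mem_coe.1 h2)).1
      exact win_inj (by omega) (by omega) h
    have hKcard : K.card = E'.card := by
      rw [hE'img, Finset.card_image_of_injOn hKinj]
    have hE'ne : E'.Nonempty := by
      rw [← Finset.card_pos]
      have h1 : E.card - 1 ≤ E'.card := Finset.pred_card_le_card_erase
      omega
    have hKne : K.Nonempty := by
      obtain ⟨x, hx⟩ := hE'ne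
      obtain ⟨k, hk, _⟩ := (hKchar x).1 hx
      exact ⟨k, hk⟩
    set k0 := K.min' hKne with hk0def
    have hk0K : k0 ∈ K := K.min'_mem hKne
    have hk0min : ∀ k ∈ K, k0 ≤ k := fun k hk => K.min'_le k hk
    have hk0w : k0 < a - 1 := Finset.mem_range.1 (Finset.mem_filter.1 hk0K).1
    set i := (i0 + k0) % (l - 1) with hidef
    have hiE' : i ∈ E' := (Finset.mem_filter.1 hk0K).2
    have hin : i < l - 1 := Nat.mod_lt _ hn0
    set B := (K.erase k0).image (fun k => k - k0) with hBdef
    have hBsub : B ⊆ Finset.Icc 1 (a - 2) := by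
      intro b hb
      obtain ⟨k, hk, rfl⟩ := Finset.mem_image.1 hb
      obtain ⟨hkne, hkK⟩ := Finset.mem_erase.1 hk
      have hkw : k < a - 1 := Finset.mem_range.1 (Finset.mem_filter.1 hkK).1
      have := hk0min k hkK
      rw [Finset.mem_Icc]
      omega
    have hBcard : B.card = K.card - 1 := by
      rw [hBdef, Finset.card_image_of_injOn, Finset.card_erase_of_mem hk0K]
      intro x hx y hy hxy
      have hx' := Finset.mem_erase.1 (Finset.mem_coe.1 hx)
      have hy' := Finset.mem_erase.1 (Finset.mem_coe.1 hy)
      have h1 := hk0min x hx'.2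
      have h2 := hk0min y hy'.2
      have hxy' : x - k0 = y - k0 := hxy
      omega
    have hE'eq : E' = insert i (B.image fun b => (i + b) % (l - 1)) := by
      ext x
      rw [hKchar x]
      simp only [Finset.mem_insert, Finset.mem_image]
      constructor
      · rintro ⟨k, hkK, rfl⟩
        rcases eq_or_ne k k0 with rfl | hne
        · left; rfl
        · right
          refine ⟨k - k0, Finset.mem_image.2 ⟨k, Finset.mem_erase.2 ⟨hne, hkK⟩, rfl⟩, ?_⟩
          rw [hidef, Nat.mod_add_mod]
          congr 1
          have := hk0min k hkK
          omega
      · rintro (rfl | ⟨b, hbB, rfl⟩)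
        · exact ⟨k0, hk0K, rfl⟩
        · obtain ⟨k, hk, rfl⟩ := Finset.mem_image.1 hbB
          obtain ⟨hkne, hkK⟩ := Finset.mem_erase.1 hk
          refine ⟨k, hkK, ?_⟩
          rw [hidef, Nat.mod_add_mod]
          congr 1
          have := hk0min k hkK
          omega
    by_cases hcn : (l - 1) ∈ E
    · apply Finset.mem_union_right
      apply Finset.mem_image.2
      have hE'card : E'.card = r - 1 := by
        rw [hE'def, Finset.card_erase_of_mem hcn, hEcard]
      refine ⟨(i, B), ?_, ?_⟩
      · rw [Finset.mem_product]
        exact ⟨Finset.mem_range.2 hin, Finset.mem_powersetCard.2 ⟨hBsub,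
          show B.card = r - 2 by omega⟩⟩
      · show insert (l - 1) (insert i (B.image fun b => (i + b) % (l - 1))) = E
        rw [← hE'eq, hE'def, Finset.insert_erase hcn]
    · apply Finset.mem_union_left
      apply Finset.mem_image.2
      have hE'card : E'.card = r := by
        rw [hE'def, Finset.erase_eq_of_notMem hcn, hEcard]
      refine ⟨(i, B), ?_, ?_⟩
      · rw [Finset.mem_product]
        exact ⟨Finset.mem_range.2 hin, Finset.mem_powersetCard.2 ⟨hBsub,
          show B.card = r - 1 by omega⟩⟩
      · show insert i (B.image fun b => (i + b) % (l - 1)) = E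
        rw [← hE'eq, hE'def, Finset.erase_eq_of_notMem hcn]
  · intro hE
    have hmemA : ∀ i (B : Finset ℕ), i < l - 1 → B ⊆ Finset.Icc 1 (a - 2) →
        insert i (B.image fun b => (i + b) % (l - 1)) ⊆ wheelClique l a i := by
      intro i B hi hBsub
      rw [hclique]
      intro x hx
      rcases Finset.mem_insert.1 hx with rfl | hx
      · exact Finset.mem_insert_of_mem (mem_win.2 ⟨0, by omega, by
          rw [Nat.add_zero, Nat.mod_eq_of_lt hi]⟩)
      · obtain ⟨b, hb, rfl⟩ := Finset.mem_image.1 hx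
        have hbI := Finset.mem_Icc.1 (hBsub hb)
        exact Finset.mem_insert_of_mem (mem_win.2 ⟨b, by omega, rfl⟩)
    have hcardA : ∀ i (B : Finset ℕ), i < l - 1 → B ⊆ Finset.Icc 1 (a - 2) →
        (insert i (B.image fun b => (i + b) % (l - 1))).card = B.card + 1 := by
      intro i B hi hBsub
      rw [Finset.card_insert_of_notMem (base_not_mem hi hBsub (by omega)),
        Finset.card_image_of_injOn (shift_injOn (by omega) hBsub)]
    rcases Finset.mem_union.1 hE with h | h
    · obtain ⟨⟨i, B⟩, hmem, rfl⟩ := Finset.mem_image.1 h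
      rw [Finset.mem_product] at hmem
      obtain ⟨hi, hB⟩ := hmem
      rw [Finset.mem_range] at hi
      rw [Finset.mem_powersetCard] at hB
      obtain ⟨hBsub, hBcard⟩ := hB
      rw [wheelEdges, Finset.mem_biUnion]
      refine ⟨i, Finset.mem_range.2 hi, Finset.mem_powersetCard.2 ⟨hmemA i B hi hBsub, ?_⟩⟩
      rw [hcardA i B hi hBsub, hBcard]
      omega
    · obtain ⟨⟨i, B⟩, hmem, rfl⟩ := Finset.mem_image.1 h
      rw [Finset.mem_product] at hmem
      obtain ⟨hi, hB⟩ := hmem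
      rw [Finset.mem_range] at hi
      rw [Finset.mem_powersetCard] at hB
      obtain ⟨hBsub, hBcard⟩ := hB
      rw [wheelEdges, Finset.mem_biUnion]
      refine ⟨i, Finset.mem_range.2 hi, Finset.mem_powersetCard.2 ⟨?_, ?_⟩⟩
      · intro x hx
        rcases Finset.mem_insert.1 hx with rfl | hx
        · rw [hclique]; exact Finset.mem_insert_self _ _
        · exact hmemA i B hi hBsub hx
      · have hnm : (l - 1) ∉ insert i (B.image fun b => (i + b) % (l - 1)) := by
          intro hmem
          rcases Finset.mem_insert.1 hmem with h' | h'
          · omega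
          · obtain ⟨b, _, he⟩ := Finset.mem_image.1 h'
            have := Nat.mod_lt (i + b) hn0
            omega
        rw [Finset.card_insert_of_notMem hnm, hcardA i B hi hBsub, hBcard]
        omega

lemma card_wheelEdges (r a l : ℕ) (hr : 2 ≤ r) (hra : r < a) (hl : 2 * a - 1 ≤ l) :
    (wheelEdges r a l).card = (l - 1) * (a - 1).choose (r - 1) := by
  classical
  have hn0 : 0 < l - 1 := by omega
  rw [wheelEdges_eq r a l hr hra hl]
  have hinjA : Set.InjOn
      (fun ib : ℕ × Finset ℕ => insert ib.1 (ib.2.image (fun b => (ib.1 + b) % (l - 1))))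
      ↑(Finset.range (l - 1) ×ˢ (Finset.Icc 1 (a - 2)).powersetCard (r - 1)) := by
    rintro ⟨i1, B1⟩ h1 ⟨i2, B2⟩ h2 heq
    rw [Finset.mem_coe, Finset.mem_product, Finset.mem_range, Finset.mem_powersetCard] at h1 h2
    have hieq : i1 = i2 := base_eq h1.1 h2.1 h1.2.1 h2.2.1 (by omega) heq
    subst hieq
    have hBeq : B1 = B2 := by
      apply image_eq_of_shift (n := l - 1) (i := i1) (by omega) h1.2.1 h2.2.1
      exact insert_cancel heq (base_not_mem h1.1 h1.2.1 (by omega))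
        (base_not_mem h1.1 h2.2.1 (by omega))
    rw [hBeq]
  have hinjB : Set.InjOn
      (fun ib : ℕ × Finset ℕ =>
        insert (l - 1) (insert ib.1 (ib.2.image (fun b => (ib.1 + b) % (l - 1)))))
      ↑(Finset.range (l - 1) ×ˢ (Finset.Icc 1 (a - 2)).powersetCard (r - 2)) := by
    rintro ⟨i1, B1⟩ h1 ⟨i2, B2⟩ h2 heq
    rw [Finset.mem_coe, Finset.mem_product, Finset.mem_range, Finset.mem_powersetCard] at h1 h2
    have hnot : ∀ (i : ℕ) (B : Finset ℕ), i < l - 1 → B ⊆ Finset.Icc 1 (a - 2) →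
        (l - 1) ∉ insert i (B.image fun b => (i + b) % (l - 1)) := by
      intro i B hi hB hmem
      rcases Finset.mem_insert.1 hmem with h' | h'
      · omega
      · obtain ⟨b, _, he⟩ := Finset.mem_image.1 h'
        have := Nat.mod_lt (i + b) hn0
        omega
    have heq' := insert_cancel heq (hnot i1 B1 h1.1 h1.2.1) (hnot i2 B2 h2.1 h2.2.1)
    have hieq : i1 = i2 := base_eq h1.1 h2.1 h1.2.1 h2.2.1 (by omega) heq'
    subst hieq
    have hBeq : B1 = B2 := by
      apply image_eq_of_shift (n := l - 1) (i := i1) (by omega) h1.2.1 h2.2.1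
      exact insert_cancel heq' (base_not_mem h1.1 h1.2.1 (by omega))
        (base_not_mem h1.1 h2.2.1 (by omega))
    rw [hBeq]
  have hdisj : Disjoint
      ((Finset.range (l - 1) ×ˢ (Finset.Icc 1 (a - 2)).powersetCard (r - 1)).image
          (fun ib => insert ib.1 (ib.2.image (fun b => (ib.1 + b) % (l - 1)))))
      ((Finset.range (l - 1) ×ˢ (Finset.Icc 1 (a - 2)).powersetCard (r - 2)).image
          (fun ib => insert (l - 1) (insert ib.1 (ib.2.image (fun b => (ib.1 + b) % (l - 1)))))) := by
    rw [Finset.disjoint_left]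
    intro E hEA hEB
    obtain ⟨⟨i, B⟩, hmem, rfl⟩ := Finset.mem_image.1 hEA
    rw [Finset.mem_product, Finset.mem_range, Finset.mem_powersetCard] at hmem
    obtain ⟨⟨i', B'⟩, hmem', heq'⟩ := Finset.mem_image.1 hEB
    have : (l - 1) ∈ insert i (B.image fun b => (i + b) % (l - 1)) := by
      rw [← heq']; exact Finset.mem_insert_self _ _
    rcases Finset.mem_insert.1 this with h' | h'
    · omega
    · obtain ⟨b, _, he⟩ := Finset.mem_image.1 h'
      have := Nat.mod_lt (i + b) hn0
      omega
  rw [Finset.card_union_of_disjoint hdisj, Finset.card_image_of_injOn hinjA,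
    Finset.card_image_of_injOn hinjB, Finset.card_product, Finset.card_product,
    Finset.card_range, Finset.card_powersetCard, Finset.card_powersetCard, Nat.card_Icc]
  obtain ⟨a', rfl⟩ : ∃ a', a = a' + 2 := ⟨a - 2, by omega⟩
  obtain ⟨r', rfl⟩ : ∃ r', r = r' + 2 := ⟨r - 2, by omega⟩
  simp only [show a' + 2 - 2 + 1 - 1 = a' from by omega, show a' + 2 - 1 = a' + 1 from by omega,
    show r' + 2 - 1 = r' + 1 from by omega, show r' + 2 - 2 = r' from by omega]
  rw [Nat.choose_succ_succ a' r']
  ring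


end WheelTight

open WheelTight in
theorem wheel_cliqueFree_card_tight (r a l : ℕ) (hr : 2 ≤ r) (hra : r < a) (hl : 2 * a - 1 ≤ l) :
    ∃ F : Finset (Finset ℕ), F ⊆ wheelEdges r a l ∧ HyperCliqueFree F a r ∧
      F.card = (a - 1).choose (r - 1) * (l - 1) - (l - 1 + (a - r)) / (a - r + 1) := by
  classical
  have ha3 : 3 ≤ a := by omega
  set n := l - 1 with hndef
  set w := a - 1 with hwdef
  set s := a - r + 1 with hsdef
  set m := (l - 1 + (a - r)) / (a - r + 1) with hmdef
  have hn0 : 0 < n := by omega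
  have hrw : r ≤ w := by omega
  have hnw : 2 * w ≤ n := by omega
  have hs0 : 0 < s := by omega
  have hsw : s ≤ w := by omega
  have hsn : s ≤ n := by omega
  have hm : m = (n + s - 1) / s := by rw [hmdef]; congr 1 <;> omega
  -- the removed spokes
  set R := ((Finset.range m).image (fun c => c * s)).image
      (fun j => insert (l - 1) (win n j (r - 1))) with hRdef
  -- basic facts about m and J
  have hdm := Nat.div_add_mod (n + s - 1) s
  have hrem : (n + s - 1) % s < s := Nat.mod_lt _ hs0
  have hJlt : ∀ c, c < m → c * s < n := by
    intro c hc
    have h1 : c * s ≤ (m - 1) * s := Nat.mul_le_mul_right s (by omega)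
    have h2 : (m - 1) * s = m * s - 1 * s := by rw [← Nat.sub_mul]
    have h3 : s * m ≤ n + s - 1 := by
      rw [hm]; generalize hX : s * ((n + s - 1) / s) = X at hdm ⊢; omega
    rw [h2, Nat.one_mul] at h1
    have h4 : m * s = s * m := Nat.mul_comm m s
    generalize hX : m * s = X at h1 h4
    omega
  have hJmem : ∀ j ∈ (Finset.range m).image (fun c => c * s), j < n := by
    intro j hj
    obtain ⟨c, hc, rfl⟩ := Finset.mem_image.1 hj
    exact hJlt c (Finset.mem_range.1 hc)
  have hwinj : ∀ j, j < n → j ∈ win n j (r - 1) := by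
    intro j hj
    exact mem_win.2 ⟨0, by omega, by rw [Nat.add_zero, Nat.mod_eq_of_lt hj]⟩
  have hnnotwin : ∀ j k, (l - 1) ∉ win n j k := by
    intro j k h
    have := win_lt hn0 h
    omega
  -- R ⊆ wheelEdges
  have hRsub : R ⊆ wheelEdges r a l := by
    intro X hX
    rw [hRdef] at hX
    obtain ⟨j, hj, rfl⟩ := Finset.mem_image.1 hX
    have hjn : j < n := hJmem j hj
    rw [wheelEdges, Finset.mem_biUnion]
    refine ⟨j, Finset.mem_range.2 hjn, Finset.mem_powersetCard.2 ⟨?_, ?_⟩⟩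
    · show insert (l - 1) (win n j (r - 1)) ⊆ wheelClique l a j
      have : wheelClique l a j = insert (l - 1) (win n j w) := rfl
      rw [this]
      exact Finset.insert_subset_insert _ (win_mono (by omega))
    · rw [Finset.card_insert_of_notMem (hnnotwin j (r - 1)), card_win (by omega)]
      omega
  -- |R| = m
  have hRcard : R.card = m := by
    rw [hRdef]
    rw [Finset.card_image_of_injOn, Finset.card_image_of_injOn, Finset.card_range]
    · intro c1 h1 c2 h2 h
      have : c1 * s = c2 * s := h
      exact Nat.eq_of_mul_eq_mul_right hs0 this
    · intro j1 h1 j2 h2 heq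
      replace h1 : j1 < n := hJmem j1 (Finset.mem_coe.1 h1)
      replace h2 : j2 < n := hJmem j2 (Finset.mem_coe.1 h2)
      have heq' : win n j1 (r - 1) = win n j2 (r - 1) :=
        insert_cancel heq (hnnotwin j1 (r - 1)) (hnnotwin j2 (r - 1))
      have hm1 : j1 ∈ win n j2 (r - 1) := heq' ▸ hwinj j1 h1
      have hm2 : j2 ∈ win n j1 (r - 1) := heq'.symm ▸ hwinj j2 h2
      obtain ⟨d1, hd1, he1⟩ := mem_win.1 hm1
      obtain ⟨d2, hd2, he2⟩ := mem_win.1 hm2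
      -- j1 = (j2 + d1) % n, j2 = (j1 + d2) % n
      have hkey : (j1 + (d2 + d1)) % n = (j1 + 0) % n := by
        rw [show j1 + (d2 + d1) = j1 + d2 + d1 from by ring, ← Nat.mod_add_mod, ← he2, ← he1,
          Nat.add_zero, Nat.mod_eq_of_lt h1]
      have : d2 + d1 = 0 := win_inj (by omega) (by omega) hkey
      rw [he1, show d1 = 0 from by omega, Nat.add_zero, Nat.mod_eq_of_lt h2]
  refine ⟨wheelEdges r a l \ R, Finset.sdiff_subset, ?_, ?_⟩
  · -- freeness
    rintro ⟨S, hScard, hSsub⟩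
    have hF : ∀ X, X ⊆ S → X.card = r → X ∈ wheelEdges r a l \ R := fun X h1 h2 =>
      hSsub (Finset.mem_powersetCard.2 ⟨h1, h2⟩)
    have hedge : ∀ X, X ⊆ S → X.card = r → ∃ i < n, X ⊆ insert (l - 1) (win n i w) := by
      intro X h1 h2
      have hX := (Finset.mem_sdiff.1 (hF X h1 h2)).1
      rw [wheelEdges, Finset.mem_biUnion] at hX
      obtain ⟨i, hi, hXp⟩ := hX
      exact ⟨i, Finset.mem_range.1 hi, (Finset.mem_powersetCard.1 hXp).1⟩
    have hSrange : S ⊆ insert (l - 1) (Finset.range n) := by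
      intro x hx
      obtain ⟨X, hX1, hX2, hX3⟩ := Finset.exists_subsuperset_card_eq (n := r)
        (Finset.singleton_subset_iff.2 hx) (by rw [Finset.card_singleton]; omega) (by omega)
      obtain ⟨i, hi, hXsub⟩ := hedge X hX2 hX3
      rcases Finset.mem_insert.1 (hXsub (hX1 (Finset.mem_singleton_self x))) with h | h
      · exact h ▸ Finset.mem_insert_self _ _
      · exact Finset.mem_insert_of_mem (Finset.mem_range.2 (win_lt hn0 h))
    by_cases hcS : (l - 1) ∈ S
    · set T := S.erase (l - 1) with hTdef
      have hTcard : T.card = w := by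
        rw [hTdef, Finset.card_erase_of_mem hcS, hScard]
      have hTrange : T ⊆ Finset.range n := by
        intro x hx
        obtain ⟨hne, hxS⟩ := Finset.mem_erase.1 hx
        rcases Finset.mem_insert.1 (hSrange hxS) with h | h
        · exact absurd h hne
        · exact h
      have hHT : Hfit n w r T := by
        intro X hX hXc
        obtain ⟨i, hi, hsub⟩ := hedge X (hX.trans (Finset.erase_subset _ _)) hXc
        refine ⟨i, hi, fun x hx => ?_⟩
        rcases Finset.mem_insert.1 (hsub hx) with rfl | h
        · exact absurd (hX hx) (Finset.notMem_erase _ _)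
        · exact h
      have hrun : ∃ c < m, win n (c * s) (r - 1) ⊆ T := by
        by_cases hsp : r = 2 ∧ n = 2 * w
        · obtain ⟨hr2, hn2⟩ := hsp
          have hsweq : s = w := by omega
          have hm2 : 2 ≤ m := by
            rw [hm, Nat.le_div_iff_mul_le (by omega)]
            omega
          have hsec := special hr2 hn2 (by omega) hTrange hTcard hHT
          have hsing : ∀ j : ℕ, j < n → win n j (r - 1) = {j} := by
            intro j hj
            ext x
            rw [mem_win, Finset.mem_singleton]
            constructor
            · rintro ⟨k, hk, rfl⟩
              rw [show k = 0 from by omega, Nat.add_zero, Nat.mod_eq_of_lt hj]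
            · rintro rfl
              exact ⟨0, by omega, by rw [Nat.add_zero, Nat.mod_eq_of_lt hj]⟩
          rcases hsec with h0T | hwT
          · refine ⟨0, by omega, ?_⟩
            rw [Nat.zero_mul, hsing 0 (by omega), Finset.singleton_subset_iff]
            exact h0T
          · refine ⟨1, by omega, ?_⟩
            rw [Nat.one_mul, hsweq, hsing w (by omega), Finset.singleton_subset_iff]
            exact hwT
        · obtain ⟨q, hq, hqe⟩ := struct hr hrw hnw hsp hTrange hTcard hHT
          obtain ⟨c, hc, δ, hδ, hje⟩ := jhit hs0 hsn hq
          rw [← hm] at hc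
          refine ⟨c, hc, ?_⟩
          rw [hqe, hje]
          exact win_shift_subset (by omega)
      obtain ⟨c, hc, hrsub⟩ := hrun
      set X0 := insert (l - 1) (win n (c * s) (r - 1)) with hX0def
      have hX0S : X0 ⊆ S := by
        intro x hx
        rcases Finset.mem_insert.1 hx with rfl | h
        · exact hcS
        · exact (Finset.erase_subset _ _) (hrsub h)
      have hX0card : X0.card = r := by
        rw [hX0def, Finset.card_insert_of_notMem (hnnotwin _ (r - 1)), card_win (by omega)]
        omega
      have hX0R : X0 ∈ R := by
        rw [hRdef]
        exact Finset.mem_image.2 ⟨c * s,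
          Finset.mem_image.2 ⟨c, Finset.mem_range.2 hc, rfl⟩, rfl⟩
      exact (Finset.mem_sdiff.1 (hF X0 hX0S hX0card)).2 hX0R
    · have hSrange' : S ⊆ Finset.range n := by
        intro x hx
        rcases Finset.mem_insert.1 (hSrange hx) with rfl | h
        · exact absurd hx hcS
        · exact h
      have hHS : Hfit n w r S := by
        intro X hX hXc
        obtain ⟨i, hi, hsub⟩ := hedge X hX hXc
        refine ⟨i, hi, fun x hx => ?_⟩
        rcases Finset.mem_insert.1 (hsub hx) with rfl | h
        · exact absurd (hX hx) hcS
        · exact h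
      have := bound' hr hrw hnw hSrange' (by omega) hHS
      omega
  · rw [Finset.card_sdiff_of_subset hRsub, card_wheelEdges r a l hr hra hl, hRcard, Nat.mul_comm]
end

section
/- Let n ≥ a ≥ 3. For every subset S of the vertex set [n] with |S| ≥ a, and every K_a-free graph G on [n], the number of edges of G with both endpoints in S is at most t_a^{|S|}, where t_a^a = C(a,2) − 1 and t_a^{i+1} = ⌊((i+1)/(i−1))·t_a^i⌋. -/
open Finset in
lemma base_case (n a : ℕ) (ha : 3 ≤ a) (G : SimpleGraph (Fin n)) (hG : G.CliqueFree a)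
    (S : Finset (Fin n)) (hcard : S.card = a) :
    {e ∈ G.edgeSet | ∀ v, v ∈ e → v ∈ S}.ncard ≤ a.choose 2 - 1 := by
  classical
  set G' := G.induce (↑S : Set (Fin n)) with hG'
  have hfree : G'.CliqueFree a := hG.comap (SimpleGraph.Embedding.induce _).isContained
  have hcards : Fintype.card ↥(↑S : Set (Fin n)) = a := by
    simpa using hcard
  have hne : G' ≠ ⊤ := by
    intro h
    refine (SimpleGraph.IsNClique.not_cliqueFree (n := a) (s := Finset.univ) ?_) hfree
    constructor
    · rw [h]
      intro x _ y _ hxy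
      exact hxy
    · simpa using hcards
  have hlt : G' < ⊤ := lt_of_le_of_ne le_top hne
  have hcardlt : G'.edgeFinset.card < a.choose 2 := by
    calc G'.edgeFinset.card < (⊤ : SimpleGraph ↥(↑S : Set (Fin n))).edgeFinset.card :=
          Finset.card_lt_card (SimpleGraph.edgeFinset_ssubset_edgeFinset.mpr hlt)
      _ = a.choose 2 := by
          rw [SimpleGraph.card_edgeFinset_top_eq_card_choose_two, hcards]
  have himg := congrArg Set.ncard
    ((by
      ext e
      constructor
      · rintro ⟨he, hv⟩
        induction e with
        | _ x y =>
          have hx : x ∈ S := hv x (Sym2.mem_mk_left x y)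
          have hy : y ∈ S := hv y (Sym2.mem_mk_right x y)
          refine ⟨s(⟨x, hx⟩, ⟨y, hy⟩), ?_, rfl⟩
          simpa [SimpleGraph.mem_edgeSet, hG'] using he
      · rintro ⟨e', he', rfl⟩
        induction e' with
        | _ u v =>
          refine ⟨by simpa [SimpleGraph.mem_edgeSet, hG'] using he', ?_⟩
          intro w hw
          rw [Sym2.map_pair_eq, Sym2.mem_iff] at hw
          rcases hw with rfl | rfl
          · exact u.2
          · exact v.2) :
      {e ∈ G.edgeSet | ∀ v, v ∈ e → v ∈ S} = Sym2.map (Subtype.val) '' G'.edgeSet)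
  rw [himg, Set.ncard_image_of_injective _ (Sym2.map.injective Subtype.val_injective)]
  have : G'.edgeSet.ncard = G'.edgeFinset.card := by
    rw [Set.ncard_eq_toFinset_card']
    congr 1
  rw [this]
  omega

open Finset in
lemma key (n a : ℕ) (ha : 3 ≤ a) (G : SimpleGraph (Fin n)) (hG : G.CliqueFree a) :
    ∀ m : ℕ, ∀ S : Finset (Fin n), S.card = m → a ≤ m →
      {e ∈ G.edgeSet | ∀ v, v ∈ e → v ∈ S}.ncard ≤ turanT a m := by
  classical
  intro m
  induction m using Nat.strong_induction_on with
  | _ m ih =>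
  intro S hcard ham
  have hF : ∀ T : Finset (Fin n), {e ∈ G.edgeSet | ∀ v, v ∈ e → v ∈ T}.ncard =
      (univ.filter (fun e => e ∈ G.edgeSet ∧ ∀ v ∈ e, v ∈ T)).card := by
    intro T
    rw [show {e ∈ G.edgeSet | ∀ v, v ∈ e → v ∈ T} =
        ↑(univ.filter (fun e => e ∈ G.edgeSet ∧ ∀ v ∈ e, v ∈ T)) by ext e; simp,
      Set.ncard_coe_finset]
  rcases eq_or_lt_of_le ham with heq | hlt
  · -- base case
    have hb := base_case n a ha G hG S (by omega)
    have : turanT a m = a.choose 2 - 1 := by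
      rw [turanT, ← heq, Nat.sub_self]
      rfl
    rw [this]; exact hb
  · -- inductive step
    obtain ⟨i, rfl⟩ : ∃ i, m = i + 1 := ⟨m - 1, by omega⟩
    have hai : a ≤ i := by omega
    set F : Finset (Fin n) → Finset (Sym2 (Fin n)) :=
      fun T => univ.filter (fun e => e ∈ G.edgeSet ∧ ∀ v ∈ e, v ∈ T) with hFdef
    -- each erased set bound
    have hErase : ∀ v ∈ S, (F (S.erase v)).card ≤ turanT a i := by
      intro v hv
      rw [← hF]
      exact ih i (by omega) (S.erase v) (by rw [Finset.card_erase_of_mem hv, hcard]; omega) hai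
    -- double counting
    have hsplit : ∀ v : Fin n, F (S.erase v) = (F S).filter (fun e => v ∉ e) := by
      intro v
      ext e
      simp only [hFdef, Finset.mem_filter, Finset.mem_univ, true_and, Finset.mem_erase]
      constructor
      · rintro ⟨he, hall⟩
        exact ⟨⟨he, fun w hw => (hall w hw).2⟩, fun hve => (hall v hve).1 rfl⟩
      · rintro ⟨⟨he, hall⟩, hve⟩
        exact ⟨he, fun w hw => ⟨fun hwv => hve (hwv ▸ hw), hall w hw⟩⟩
    have hcount : ∑ v ∈ S, (F (S.erase v)).card = (i - 1) * (F S).card := by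
      have h1 : ∑ v ∈ S, (F (S.erase v)).card
          = ∑ e ∈ F S, (S.filter (fun v => v ∉ e)).card := by
        simp_rw [hsplit, Finset.card_filter]
        rw [Finset.sum_comm]
      rw [h1]
      have h2 : ∀ e ∈ F S, (S.filter (fun v => v ∉ e)).card = i - 1 := by
        intro e he
        simp only [hFdef, Finset.mem_filter, Finset.mem_univ, true_and] at he
        obtain ⟨he1, he2⟩ := he
        induction e with
        | _ x y =>
          have hxy : x ≠ y := (G.ne_of_adj (by simpa [SimpleGraph.mem_edgeSet] using he1))
          have hx : x ∈ S := he2 x (Sym2.mem_mk_left x y)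
          have hy : y ∈ S := he2 y (Sym2.mem_mk_right x y)
          have : S.filter (fun v => v ∉ s(x, y)) = S \ {x, y} := by
            ext v
            simp [Sym2.mem_iff, not_or, and_comm]
          rw [this, Finset.card_sdiff_of_subset (by
            intro w hw
            simp only [Finset.mem_insert, Finset.mem_singleton] at hw
            rcases hw with rfl | rfl <;> assumption)]
          rw [Finset.card_pair hxy, hcard]
          omega
      rw [Finset.sum_congr rfl h2, Finset.sum_const, smul_eq_mul, Nat.mul_comm]
    have hsum_le : ∑ v ∈ S, (F (S.erase v)).card ≤ (i + 1) * turanT a i := by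
      calc ∑ v ∈ S, (F (S.erase v)).card ≤ ∑ _v ∈ S, turanT a i :=
            Finset.sum_le_sum hErase
        _ = (i + 1) * turanT a i := by rw [Finset.sum_const, hcard, smul_eq_mul]
    have hmul : (F S).card * (i - 1) ≤ (i + 1) * turanT a i := by
      rw [Nat.mul_comm, ← hcount]; exact hsum_le
    have hdiv : (F S).card ≤ ((i + 1) * turanT a i) / (i - 1) :=
      (Nat.le_div_iff_mul_le (by omega)).mpr hmul
    have hT : turanT a (i + 1) = ((i + 1) * turanT a i) / (i - 1) := by
      have h1 : i + 1 - a = (i - a) + 1 := by omega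
      rw [turanT, h1, turanTAux]
      have h2 : a + (i - a) = i := by omega
      rw [h2, turanT]
    rw [hF, hT]
    exact hdiv

theorem induced_edges_le_turanT (n a : ℕ) (ha : 3 ≤ a) (han : a ≤ n)
    (G : SimpleGraph (Fin n)) (hG : G.CliqueFree a)
    (S : Finset (Fin n)) (hS : a ≤ S.card) :
    {e ∈ G.edgeSet | ∀ v, v ∈ e → v ∈ S}.ncard ≤ turanT a S.card :=
  key n a ha G hG S.card S rfl hS
end
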